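/- arXiv:0810.2466 — 5 statements merged into one kernel-verified Lean document; each statement's English description precedes it below -/
import Mathlib

section
/- Let n ≥ 2, R > 0, τ > 0 and C ≥ 0. Let h : ℝⁿ → ℝ be differentiable at every point of E_R and satisfy ‖Dh(x)‖ ≤ C‖x‖^(−τ−1) for all x ∈ E_R. Then there exists a real number a such that h(x) tends to a as ‖x‖ → ∞ (i.e. along the filter of complements of compact sets), and moreover |h(x) − a| ≤ (C/τ)·‖x‖^(−τ) for every x ∈ E_R. -/
/-!
Along a ray `t ↦ h (t • u)` the derivative is bounded by `C t^(-τ-1)`, the negative of the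
derivative of `(C/τ) t^(-τ)`; hence the ray converges to some `A u` with
`‖h (t • u) - A u‖ ≤ (C/τ) t^(-τ)`. For directions with `u + v ≠ 0` the chord `[t • u, t • v]`
stays at distance `t ‖u + v‖ / 2` from the origin, and the mean value inequality along it gives
`‖h (t • u) - h (t • v)‖ = O(t^(-τ))`, so `A u = A v`. In dimension at least two an antipodal pair
is joined through a direction orthogonal to both, so `A` is constant.
-/

open Filter Set Topology Module

section Real

variable {F : Type*} [NormedAddCommGroup F] [NormedSpace ℝ F]

theorem norm_sub_le_sub_of_norm_deriv_le_neg_deriv {f f' : ℝ → F} {φ φ' : ℝ → ℝ} {s t : ℝ}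
    (hst : s ≤ t) (hf : ∀ r ∈ Icc s t, HasDerivAt f (f' r) r)
    (hφ : ∀ r ∈ Icc s t, HasDerivAt φ (φ' r) r) (bound : ∀ r ∈ Icc s t, ‖f' r‖ ≤ -φ' r) :
    ‖f t - f s‖ ≤ φ s - φ t :=
  image_norm_le_of_norm_deriv_right_le_deriv_boundary' (f := fun r => f r - f s)
    (B := fun r => φ s - φ r) (B' := fun r => -φ' r)
    (fun r hr => ((hf r hr).sub_const _).continuousAt.continuousWithinAt)
    (fun r hr => ((hf r (Ico_subset_Icc_self hr)).sub_const _).hasDerivWithinAt)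
    (by simp) (fun r hr => ((hφ r hr).const_sub _).continuousAt.continuousWithinAt)
    (fun r hr => ((hφ r (Ico_subset_Icc_self hr)).const_sub _).hasDerivWithinAt)
    (fun r hr => bound r (Ico_subset_Icc_self hr)) (right_mem_Icc.2 hst)

theorem exists_tendsto_atTop_of_norm_deriv_le_neg_deriv [CompleteSpace F] {f f' : ℝ → F}
    {φ φ' : ℝ → ℝ} {R : ℝ} (hf : ∀ r, R ≤ r → HasDerivAt f (f' r) r)
    (hφ : ∀ r, R ≤ r → HasDerivAt φ (φ' r) r) (bound : ∀ r, R ≤ r → ‖f' r‖ ≤ -φ' r)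
    (hφ_tendsto : Tendsto φ atTop (𝓝 0)) :
    ∃ a, Tendsto f atTop (𝓝 a) ∧ ∀ r, R ≤ r → ‖f r - a‖ ≤ φ r := by
  have hdist : ∀ s t, R ≤ s → s ≤ t → ‖f t - f s‖ ≤ φ s - φ t := fun s t hs hst =>
    norm_sub_le_sub_of_norm_deriv_le_neg_deriv hst (fun r hr => hf r (hs.trans hr.1))
      (fun r hr => hφ r (hs.trans hr.1)) (fun r hr => bound r (hs.trans hr.1))
  have hφ_nonneg : ∀ r, R ≤ r → 0 ≤ φ r := fun r hr =>
    le_of_tendsto hφ_tendsto <| (eventually_ge_atTop r).mono fun t ht => by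
      linarith [norm_nonneg (f t - f r), hdist r t hr ht]
  have hcauchy : CauchySeq f := by
    refine Metric.cauchySeq_iff'.2 fun ε hε => ?_
    obtain ⟨N, hNε, hNR⟩ :=
      ((hφ_tendsto.eventually (gt_mem_nhds hε)).and (eventually_ge_atTop R)).exists
    refine ⟨N, fun t ht => ?_⟩
    rw [dist_eq_norm]
    linarith [hdist N t hNR ht, hφ_nonneg t (hNR.trans ht)]
  obtain ⟨a, ha⟩ := cauchySeq_tendsto_of_complete hcauchy
  refine ⟨a, ha, fun r hr => ?_⟩
  refine le_of_tendsto ((tendsto_const_nhds.sub ha).norm) ?_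
  filter_upwards [eventually_ge_atTop r] with t ht
  rw [norm_sub_rev]
  linarith [hdist r t hr ht, hφ_nonneg t (hr.trans ht)]

theorem hasDerivAt_div_mul_rpow_neg (C : ℝ) {τ r : ℝ} (hτ : τ ≠ 0) (hr : r ≠ 0) :
    HasDerivAt (fun r : ℝ => C / τ * r ^ (-τ)) (-(C * r ^ (-τ - 1))) r := by
  refine ((Real.hasDerivAt_rpow_const (p := -τ) (Or.inl hr)).const_mul (C / τ)).congr_deriv ?_
  field_simp

end Real

section Normed

variable {E F : Type*} [NormedAddCommGroup E] [NormedSpace ℝ E]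
  [NormedAddCommGroup F] [NormedSpace ℝ F] {R τ C : ℝ} {h : E → F}

def HasDecayingFDeriv (h : E → F) (R τ C : ℝ) : Prop :=
  ∀ x : E, R ≤ ‖x‖ → DifferentiableAt ℝ h x ∧ ‖fderiv ℝ h x‖ ≤ C * ‖x‖ ^ (-τ - 1)

theorem HasDecayingFDeriv.exists_tendsto_smul_atTop [CompleteSpace F]
    (hh : HasDecayingFDeriv h R τ C) (hR : 0 < R) (hτ : 0 < τ) {u : E} (hu : ‖u‖ = 1) :
    ∃ a, Tendsto (fun t : ℝ => h (t • u)) atTop (𝓝 a) ∧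
      ∀ t, R ≤ t → ‖h (t • u) - a‖ ≤ C / τ * t ^ (-τ) := by
  have hnorm : ∀ t, R ≤ t → ‖t • u‖ = t := fun t ht => by
    rw [norm_smul, hu, mul_one, Real.norm_of_nonneg (hR.le.trans ht)]
  have hR_le : ∀ t, R ≤ t → R ≤ ‖t • u‖ := fun t ht => (hnorm t ht).symm ▸ ht
  refine exists_tendsto_atTop_of_norm_deriv_le_neg_deriv (f' := fun t => fderiv ℝ h (t • u) u)
    (fun t ht => ?_) (fun t ht => hasDerivAt_div_mul_rpow_neg C hτ.ne' (hR.trans_le ht).ne')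
    (fun t ht => ?_) ?_
  · exact (hh _ (hR_le t ht)).1.hasFDerivAt.comp_hasDerivAt t
      (by simpa using (hasDerivAt_id t).smul_const u)
  · calc ‖fderiv ℝ h (t • u) u‖ ≤ ‖fderiv ℝ h (t • u)‖ := by
          simpa [hu] using (fderiv ℝ h (t • u)).le_opNorm u
      _ ≤ C * t ^ (-τ - 1) := by simpa [hnorm t ht] using (hh _ (hR_le t ht)).2
      _ = -(-(C * t ^ (-τ - 1))) := (neg_neg _).symm
  · simpa using (tendsto_rpow_neg_atTop hτ).const_mul (C / τ)

end Normed

section Inner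

variable {E F : Type*} [NormedAddCommGroup E] [InnerProductSpace ℝ E]
  [NormedAddCommGroup F] [NormedSpace ℝ F] {R τ C : ℝ} {h : E → F}

theorem norm_add_le_two_mul_norm_of_mem_segment {x y z : E} (hxy : ‖x‖ = ‖y‖)
    (hz : z ∈ segment ℝ x y) : ‖x + y‖ ≤ 2 * ‖z‖ := by
  obtain ⟨p, q, -, -, hpq, rfl⟩ := hz
  have hinner : inner ℝ (x + y) (p • x + q • y) = ‖x + y‖ ^ 2 / 2 := by
    simp only [inner_add_left, inner_add_right, real_inner_smul_right,
      real_inner_self_eq_norm_sq, norm_add_sq_real, hxy]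
    rw [real_inner_comm x y]
    linear_combination (‖y‖ ^ 2 + inner ℝ x y) * hpq
  nlinarith [real_inner_le_norm (x + y) (p • x + q • y), norm_nonneg (x + y),
    norm_nonneg (p • x + q • y)]

theorem HasDecayingFDeriv.norm_sub_le_of_norm_eq (hh : HasDecayingFDeriv h R τ C) (hR : 0 < R)
    (hτ : -1 ≤ τ) (hC : 0 ≤ C) {x y : E} (hxy : ‖x‖ = ‖y‖) (hR_le : R ≤ ‖x + y‖ / 2) :
    ‖h x - h y‖ ≤ C * (‖x + y‖ / 2) ^ (-τ - 1) * ‖x - y‖ := by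
  have hseg : ∀ z ∈ segment ℝ y x, ‖x + y‖ / 2 ≤ ‖z‖ := fun z hz => by
    linarith [norm_add_le_two_mul_norm_of_mem_segment hxy (segment_symm ℝ y x ▸ hz)]
  refine Convex.norm_image_sub_le_of_norm_fderiv_le (fun z hz => (hh z ?_).1) (fun z hz => ?_)
    (convex_segment y x) (left_mem_segment ℝ y x) (right_mem_segment ℝ y x)
  · exact hR_le.trans (hseg z hz)
  · refine (hh z (hR_le.trans (hseg z hz))).2.trans ?_
    exact mul_le_mul_of_nonneg_left
      (Real.rpow_le_rpow_of_nonpos (hR.trans_le hR_le) (hseg z hz) (by linarith)) hC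

theorem HasDecayingFDeriv.tendsto_sub_smul_atTop_of_add_ne_zero (hh : HasDecayingFDeriv h R τ C)
    (hR : 0 < R) (hτ : 0 < τ) (hC : 0 ≤ C) {u v : E} (huv : ‖u‖ = ‖v‖) (hne : u + v ≠ 0) :
    Tendsto (fun t : ℝ => h (t • u) - h (t • v)) atTop (𝓝 0) := by
  set m := ‖u + v‖ / 2
  have hm : 0 < m := by positivity
  have hdecay : Tendsto (fun t : ℝ => C * ‖u - v‖ / m * (t * m) ^ (-τ)) atTop (𝓝 0) := by
    simpa using ((tendsto_rpow_neg_atTop hτ).comp (tendsto_id.atTop_mul_const hm)).const_mul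
      (C * ‖u - v‖ / m)
  refine squeeze_zero_norm' ?_ hdecay
  filter_upwards [eventually_gt_atTop 0, eventually_ge_atTop (R / m)] with t ht htR
  have hsum : ‖t • u + t • v‖ / 2 = t * m := by
    rw [← smul_add, norm_smul, Real.norm_of_nonneg ht.le, mul_div_assoc]
  have hsub : ‖t • u - t • v‖ = t * ‖u - v‖ := by
    rw [← smul_sub, norm_smul, Real.norm_of_nonneg ht.le]
  have hchord := hh.norm_sub_le_of_norm_eq hR (by linarith) hC (x := t • u) (y := t • v)
    (by rw [norm_smul, norm_smul, huv]) (by rw [hsum]; exact (div_le_iff₀ hm).1 htR)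
  rw [hsum, hsub, Real.rpow_sub_one (by positivity)] at hchord
  refine hchord.trans_eq ?_
  field_simp

theorem HasDecayingFDeriv.eq_of_tendsto_smul_atTop_of_add_ne_zero
    (hh : HasDecayingFDeriv h R τ C) (hR : 0 < R) (hτ : 0 < τ) (hC : 0 ≤ C) {u v : E} {a b : F}
    (huv : ‖u‖ = ‖v‖) (hne : u + v ≠ 0) (ha : Tendsto (fun t : ℝ => h (t • u)) atTop (𝓝 a))
    (hb : Tendsto (fun t : ℝ => h (t • v)) atTop (𝓝 b)) : a = b :=
  sub_eq_zero.1 <| tendsto_nhds_unique (ha.sub hb)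
    (hh.tendsto_sub_smul_atTop_of_add_ne_zero hR hτ hC huv hne)

theorem exists_norm_eq_one_inner_eq_zero [FiniteDimensional ℝ E] (hE : 2 ≤ finrank ℝ E) (u : E) :
    ∃ w : E, ‖w‖ = 1 ∧ inner ℝ u w = 0 := by
  have hspan : finrank ℝ (ℝ ∙ u) ≤ 1 := by
    simpa using finrank_span_le_card ({u} : Set E)
  have hperp : (ℝ ∙ u)ᗮ ≠ ⊥ := by
    rw [← Submodule.one_le_finrank_iff]
    have := (ℝ ∙ u).finrank_add_finrank_orthogonal
    omega
  obtain ⟨w, hw, hw0⟩ := Submodule.exists_mem_ne_zero_of_ne_bot hperp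
  refine ⟨‖w‖⁻¹ • w, norm_smul_inv_norm hw0, ?_⟩
  rw [real_inner_smul_right, Submodule.mem_orthogonal_singleton_iff_inner_right.1 hw, mul_zero]

theorem HasDecayingFDeriv.eq_of_tendsto_smul_atTop [FiniteDimensional ℝ E] [CompleteSpace F]
    (hh : HasDecayingFDeriv h R τ C) (hE : 2 ≤ finrank ℝ E) (hR : 0 < R) (hτ : 0 < τ)
    (hC : 0 ≤ C) {u v : E} {a b : F} (hu : ‖u‖ = 1) (hv : ‖v‖ = 1)
    (ha : Tendsto (fun t : ℝ => h (t • u)) atTop (𝓝 a))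
    (hb : Tendsto (fun t : ℝ => h (t • v)) atTop (𝓝 b)) : a = b := by
  by_cases hne : u + v = 0
  · obtain ⟨w, hw, huw⟩ := exists_norm_eq_one_inner_eq_zero hE u
    obtain ⟨c, hc, -⟩ := hh.exists_tendsto_smul_atTop hR hτ hw
    have hinner (z : E) : inner ℝ u (z + w) = inner ℝ u z := by
      rw [inner_add_right, huw, add_zero]
    have huw_ne : u + w ≠ 0 := fun h0 => by
      simpa [hinner, real_inner_self_eq_norm_sq, hu] using congrArg (inner ℝ u) h0
    have hwv_ne : w + v ≠ 0 := fun h0 => by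
      rw [eq_neg_of_add_eq_zero_right hne, add_comm] at h0
      simpa [hinner, real_inner_self_eq_norm_sq, hu] using congrArg (inner ℝ u) h0
    calc a = c := hh.eq_of_tendsto_smul_atTop_of_add_ne_zero hR hτ hC (hu.trans hw.symm)
          huw_ne ha hc
      _ = b := hh.eq_of_tendsto_smul_atTop_of_add_ne_zero hR hτ hC (hw.trans hv.symm)
          hwv_ne hc hb
  · exact hh.eq_of_tendsto_smul_atTop_of_add_ne_zero hR hτ hC (hu.trans hv.symm) hne ha hb

theorem HasDecayingFDeriv.exists_forall_norm_sub_le [FiniteDimensional ℝ E] [CompleteSpace F]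
    (hh : HasDecayingFDeriv h R τ C) (hE : 2 ≤ finrank ℝ E) (hR : 0 < R) (hτ : 0 < τ)
    (hC : 0 ≤ C) : ∃ a, ∀ x : E, R ≤ ‖x‖ → ‖h x - a‖ ≤ C / τ * ‖x‖ ^ (-τ) := by
  obtain ⟨e, he⟩ : ∃ e : E, ‖e‖ = 1 :=
    have : Nontrivial E := Module.nontrivial_of_finrank_pos (R := ℝ) (by omega)
    exists_norm_eq E zero_le_one
  obtain ⟨a, ha, -⟩ := hh.exists_tendsto_smul_atTop hR hτ he
  refine ⟨a, fun x hx => ?_⟩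
  have hx0 : ‖x‖ ≠ 0 := (hR.trans_le hx).ne'
  have hu : ‖‖x‖⁻¹ • x‖ = 1 := norm_smul_inv_norm (norm_ne_zero_iff.1 hx0)
  obtain ⟨b, hb, hb_le⟩ := hh.exists_tendsto_smul_atTop hR hτ hu
  have := hb_le ‖x‖ hx
  rwa [smul_inv_smul₀ hx0, hh.eq_of_tendsto_smul_atTop hE hR hτ hC hu he hb ha] at this

end Inner

theorem tendsto_cocompact_of_norm_sub_le {E F : Type*} [SeminormedAddGroup E] [ProperSpace E]
    [SeminormedAddCommGroup F] {f : E → F} {a : F} {φ : ℝ → ℝ} {R : ℝ}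
    (hf : ∀ x, R ≤ ‖x‖ → ‖f x - a‖ ≤ φ ‖x‖) (hφ : Tendsto φ atTop (𝓝 0)) :
    Tendsto f (cocompact E) (𝓝 a) := by
  refine tendsto_iff_norm_sub_tendsto_zero.2 <|
    squeeze_zero_norm' ?_ (hφ.comp (tendsto_norm_cocompact_atTop (E := E)))
  filter_upwards [(tendsto_norm_cocompact_atTop (E := E)).eventually_ge_atTop R] with x hx
  simpa using hf x hx

/-- Lemma 4 of the paper. If `h : ℝⁿ → ℝ` (with `n ≥ 2`) is
differentiable on the exterior region `E_R = {‖x‖ ≥ R}` with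
`‖Dh(x)‖ ≤ C‖x‖^(-τ-1)` there, then `h` has a finite limit `a` at infinity and
`|h x - a| ≤ (C/τ)‖x‖^(-τ)` on `E_R`. -/
theorem lemma4_limit_at_infinity (n : ℕ) (hn : 2 ≤ n) (R τ C : ℝ)
    (hR : 0 < R) (hτ : 0 < τ) (hC : 0 ≤ C)
    (h : EuclideanSpace ℝ (Fin n) → ℝ)
    (hdiff : ∀ x : EuclideanSpace ℝ (Fin n), R ≤ ‖x‖ → DifferentiableAt ℝ h x)
    (hbound : ∀ x : EuclideanSpace ℝ (Fin n), R ≤ ‖x‖ →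
      ‖fderiv ℝ h x‖ ≤ C * ‖x‖ ^ (-τ - 1)) :
    ∃ a : ℝ,
      Tendsto h (cocompact (EuclideanSpace ℝ (Fin n))) (nhds a) ∧
      ∀ x : EuclideanSpace ℝ (Fin n), R ≤ ‖x‖ → |h x - a| ≤ (C / τ) * ‖x‖ ^ (-τ) := by
  have hh : HasDecayingFDeriv h R τ C := fun x hx => ⟨hdiff x hx, hbound x hx⟩
  obtain ⟨a, ha⟩ := hh.exists_forall_norm_sub_le (by rwa [finrank_euclideanSpace_fin]) hR hτ hC
  have hdecay : Tendsto (fun r : ℝ => C / τ * r ^ (-τ)) atTop (𝓝 0) := by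
    simpa using (tendsto_rpow_neg_atTop hτ).const_mul (C / τ)
  exact ⟨a, tendsto_cocompact_of_norm_sub_le ha hdecay, ha⟩
end

section
/- Let n ≥ 2, R > 0, τ > 0 and C ≥ 0. Let h : ℝⁿ → ℝ be differentiable at every point of E_R and satisfy ‖Dh(x)‖ ≤ C‖x‖^(−τ−1) for all x ∈ E_R. Then for every r ≥ R and all points x, z ∈ ℝⁿ with ‖x‖ = ‖z‖ = r, one has |h(x) − h(z)| ≤ π·C·r^(−τ). -/
/-!
Join `x` to `z` by the great circle `t ↦ cos t • x + sin t • w`, where `w ⟂ x` has norm `r` and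
the parameter runs over `[0, ∠(x, z)] ⊆ [0, π]`; when `z = ±x` any such `w` works, and one exists
because `n ≥ 2`. This arc stays on the sphere of radius `r`, where `‖Dh‖ ≤ C r^(-τ-1)`, and has
speed `r`, so the mean value inequality gives `|h z - h x| ≤ C r^(-τ-1) · r · π`.
-/

open InnerProductGeometry Metric Real
open scoped RealInnerProductSpace

variable {E F : Type*} [NormedAddCommGroup E] [InnerProductSpace ℝ E]
  [NormedAddCommGroup F] [NormedSpace ℝ F]

theorem exists_norm_eq_inner_eq_zero [FiniteDimensional ℝ E] (hE : 2 ≤ Module.finrank ℝ E)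
    (x : E) {r : ℝ} (hr : 0 ≤ r) : ∃ w : E, ‖w‖ = r ∧ ⟪x, w⟫ = 0 := by
  have hspan : (ℝ ∙ x) ≠ ⊤ := fun htop => by
    have := finrank_span_le_card (R := ℝ) ({x} : Set E)
    rw [htop, finrank_top, Set.toFinset_singleton, Finset.card_singleton] at this
    omega
  have : Nontrivial (ℝ ∙ x)ᗮ :=
    Submodule.nontrivial_iff_ne_bot.2 (mt Submodule.orthogonal_eq_bot_iff.1 hspan)
  obtain ⟨w, hw⟩ := exists_norm_eq (ℝ ∙ x)ᗮ hr
  exact ⟨w, hw, Submodule.mem_orthogonal_singleton_iff_inner_right.1 w.2⟩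

theorem norm_smul_add_smul_of_inner_eq_zero {x w : E} {r : ℝ} (hr : 0 ≤ r) (hx : ‖x‖ = r)
    (hw : ‖w‖ = r) (hxw : ⟪x, w⟫ = 0) {a b : ℝ} (hab : a ^ 2 + b ^ 2 = 1) :
    ‖a • x + b • w‖ = r := by
  have hperp : ⟪a • x, b • w⟫ = 0 := by
    rw [real_inner_smul_left, real_inner_smul_right, hxw, mul_zero, mul_zero]
  rw [← sq_eq_sq₀ (norm_nonneg _) hr, sq, norm_add_sq_eq_norm_sq_add_norm_sq_real hperp,
    norm_smul, norm_smul, hx, hw, Real.norm_eq_abs, Real.norm_eq_abs]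
  linear_combination r ^ 2 * hab + r ^ 2 * sq_abs a + r ^ 2 * sq_abs b

noncomputable def greatCircle (x w : E) (t : ℝ) : E := cos t • x + sin t • w

@[simp]
theorem greatCircle_zero (x w : E) : greatCircle x w 0 = x := by
  simp [greatCircle]

theorem hasDerivAt_greatCircle (x w : E) (t : ℝ) :
    HasDerivAt (greatCircle x w) (greatCircle x w (t + π / 2)) t := by
  rw [greatCircle, cos_add_pi_div_two, sin_add_pi_div_two]
  exact ((hasDerivAt_cos t).smul_const x).add ((hasDerivAt_sin t).smul_const w)

theorem norm_greatCircle {x w : E} {r : ℝ} (hr : 0 ≤ r) (hx : ‖x‖ = r) (hw : ‖w‖ = r)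
    (hxw : ⟪x, w⟫ = 0) (t : ℝ) : ‖greatCircle x w t‖ = r :=
  norm_smul_add_smul_of_inner_eq_zero hr hx hw hxw (by rw [add_comm, sin_sq_add_cos_sq])

theorem norm_sub_le_of_norm_fderiv_le_greatCircle {f : E → F} {x w : E} {r M θ : ℝ}
    (hr : 0 ≤ r) (hx : ‖x‖ = r) (hw : ‖w‖ = r) (hxw : ⟪x, w⟫ = 0)
    (hf : ∀ y ∈ sphere (0 : E) r, DifferentiableAt ℝ f y)
    (hM : ∀ y ∈ sphere (0 : E) r, ‖fderiv ℝ f y‖ ≤ M) (hθ : 0 ≤ θ) :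
    ‖f (greatCircle x w θ) - f x‖ ≤ M * r * θ := by
  have hγ : ∀ t, greatCircle x w t ∈ sphere (0 : E) r := fun t =>
    mem_sphere_zero_iff_norm.2 (norm_greatCircle hr hx hw hxw t)
  have hderiv : ∀ t, HasDerivAt (f ∘ greatCircle x w)
      (fderiv ℝ f (greatCircle x w t) (greatCircle x w (t + π / 2))) t := fun t =>
    (hf _ (hγ t)).hasFDerivAt.comp_hasDerivAt t (hasDerivAt_greatCircle x w t)
  have hspeed : ∀ t, ‖fderiv ℝ f (greatCircle x w t) (greatCircle x w (t + π / 2))‖ ≤ M * r :=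
    fun t => by
      refine ((fderiv ℝ f _).le_opNorm _).trans ?_
      rw [norm_greatCircle hr hx hw hxw]
      exact mul_le_mul_of_nonneg_right (hM _ (hγ t)) hr
  simpa using norm_image_sub_le_of_norm_deriv_le_segment'
    (fun t _ => (hderiv t).hasDerivWithinAt) (fun t _ => hspeed t) θ ⟨hθ, le_rfl⟩

theorem exists_eq_greatCircle_angle [FiniteDimensional ℝ E] (hE : 2 ≤ Module.finrank ℝ E)
    {x z : E} {r : ℝ} (hr : 0 < r) (hx : ‖x‖ = r) (hz : ‖z‖ = r) :
    ∃ w : E, ‖w‖ = r ∧ ⟪x, w⟫ = 0 ∧ z = greatCircle x w (angle x z) := by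
  set θ := angle x z
  set u := z - cos θ • x
  have hxu : ⟪x, u⟫ = 0 := by
    rw [inner_sub_right, real_inner_smul_right, cos_angle, real_inner_self_eq_norm_sq, hx, hz]
    field_simp
    ring
  have hu : ‖u‖ = r * sin θ := by
    have hpyth : ‖u + cos θ • x‖ * ‖u + cos θ • x‖ = ‖u‖ * ‖u‖ + ‖cos θ • x‖ * ‖cos θ • x‖ :=
      norm_add_sq_eq_norm_sq_add_norm_sq_real
        (by rw [real_inner_smul_right, real_inner_comm, hxu, mul_zero])
    rw [sub_add_cancel, norm_smul, hz, hx, Real.norm_eq_abs] at hpyth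
    rw [← sq_eq_sq₀ (norm_nonneg _) (mul_nonneg hr.le (sin_angle_nonneg x z))]
    linear_combination -hpyth - r ^ 2 * sin_sq_add_cos_sq θ - r ^ 2 * sq_abs (cos θ)
  rcases eq_or_ne (sin θ) 0 with hsin | hsin
  · obtain ⟨w, hw, hxw⟩ := exists_norm_eq_inner_eq_zero hE x hr.le
    refine ⟨w, hw, hxw, ?_⟩
    rw [greatCircle, hsin, zero_smul, add_zero, ← sub_eq_zero]
    simpa [hsin] using hu
  · refine ⟨(sin θ)⁻¹ • u, ?_, ?_, ?_⟩
    · rw [norm_smul, hu, norm_inv, Real.norm_eq_abs,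
        abs_of_nonneg (sin_angle_nonneg x z : 0 ≤ sin θ), mul_comm r]
      exact inv_mul_cancel_left₀ hsin r
    · rw [real_inner_smul_right, hxu, mul_zero]
    · rw [greatCircle, smul_inv_smul₀ hsin, add_sub_cancel]

theorem norm_sub_le_pi_mul_of_norm_fderiv_le_on_sphere [FiniteDimensional ℝ E]
    (hE : 2 ≤ Module.finrank ℝ E) {f : E → F} {r M : ℝ} (hr : 0 < r)
    (hf : ∀ y ∈ sphere (0 : E) r, DifferentiableAt ℝ f y)
    (hM : ∀ y ∈ sphere (0 : E) r, ‖fderiv ℝ f y‖ ≤ M) {x z : E}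
    (hx : x ∈ sphere (0 : E) r) (hz : z ∈ sphere (0 : E) r) :
    ‖f z - f x‖ ≤ π * M * r := by
  rw [mem_sphere_zero_iff_norm] at hx hz
  obtain ⟨w, hw, hxw, hzw⟩ := exists_eq_greatCircle_angle hE hr hx hz
  have hM0 : 0 ≤ M := (norm_nonneg _).trans (hM x (mem_sphere_zero_iff_norm.2 hx))
  rw [hzw]
  calc ‖f (greatCircle x w (angle x z)) - f x‖
      ≤ M * r * angle x z :=
        norm_sub_le_of_norm_fderiv_le_greatCircle hr.le hx hw hxw hf hM (angle_nonneg _ _)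
    _ ≤ M * r * π := by gcongr; exact angle_le_pi _ _
    _ = π * M * r := by ring

theorem lemma4_tangential_estimate_general (n : ℕ) (hn : 2 ≤ n) (R τ C : ℝ)
    (hR : 0 < R)
    (h : EuclideanSpace ℝ (Fin n) → ℝ)
    (hdiff : ∀ x : EuclideanSpace ℝ (Fin n), R ≤ ‖x‖ → DifferentiableAt ℝ h x)
    (hbound : ∀ x : EuclideanSpace ℝ (Fin n), R ≤ ‖x‖ →
      ‖fderiv ℝ h x‖ ≤ C * ‖x‖ ^ (-τ - 1)) :
    ∀ r : ℝ, R ≤ r → ∀ x z : EuclideanSpace ℝ (Fin n), ‖x‖ = r → ‖z‖ = r →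
      |h x - h z| ≤ Real.pi * C * r ^ (-τ) := by
  intro r hr x z hx hz
  have hr0 : 0 < r := hR.trans_le hr
  have hsphere : ∀ y ∈ sphere (0 : EuclideanSpace ℝ (Fin n)) r, R ≤ ‖y‖ := fun y hy => by
    rwa [mem_sphere_zero_iff_norm.1 hy]
  have key := norm_sub_le_pi_mul_of_norm_fderiv_le_on_sphere (by simpa using hn) hr0
    (fun y hy => hdiff y (hsphere y hy))
    (fun y hy => mem_sphere_zero_iff_norm.1 hy ▸ hbound y (hsphere y hy))
    (mem_sphere_zero_iff_norm.2 hz) (mem_sphere_zero_iff_norm.2 hx)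
  calc |h x - h z| ≤ π * (C * r ^ (-τ - 1)) * r := key
    _ = π * C * r ^ (-τ) := by
      rw [mul_assoc, mul_assoc, ← rpow_add_one hr0.ne', sub_add_cancel, mul_assoc]

/-- estimate (eqlem4a) in the proof of Lemma 4. If `h : ℝⁿ → ℝ`
(with `n ≥ 2`) is differentiable on `E_R = {‖x‖ ≥ R}` with `‖Dh(x)‖ ≤ C‖x‖^(-τ-1)`
there, then for any two points `x, z` on a common sphere of radius `r ≥ R` one has
`|h x - h z| ≤ π C r^(-τ)`. -/
theorem lemma4_tangential_estimate (n : ℕ) (hn : 2 ≤ n) (R τ C : ℝ)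
    (hR : 0 < R) (hτ : 0 < τ) (hC : 0 ≤ C)
    (h : EuclideanSpace ℝ (Fin n) → ℝ)
    (hdiff : ∀ x : EuclideanSpace ℝ (Fin n), R ≤ ‖x‖ → DifferentiableAt ℝ h x)
    (hbound : ∀ x : EuclideanSpace ℝ (Fin n), R ≤ ‖x‖ →
      ‖fderiv ℝ h x‖ ≤ C * ‖x‖ ^ (-τ - 1)) :
    ∀ r : ℝ, R ≤ r → ∀ x z : EuclideanSpace ℝ (Fin n), ‖x‖ = r → ‖z‖ = r →
      |h x - h z| ≤ Real.pi * C * r ^ (-τ) :=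
  lemma4_tangential_estimate_general n hn R τ C hR h hdiff hbound
end

section
/- Let n ≥ 2, R > 0, τ > 0 and C ≥ 0. Let h : ℝⁿ → ℝ be differentiable at every point of E_R and satisfy ‖Dh(x)‖ ≤ C‖x‖^(−τ−1) for all x ∈ E_R. Then for every R₁ ≥ R and all x, y ∈ ℝⁿ with R₁ ≤ ‖x‖ ≤ ‖y‖, one has |h(x) − h(y)| ≤ (π + 1/τ)·C·R₁^(−τ). In particular h satisfies the Cauchy criterion at infinity. -/
/-!
Write `x = ‖x‖ • u` with `‖u‖ = 1` and pass through `z = ‖y‖ • u`. On the ray from `x` to `z`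
the gradient bound integrates to `(C / τ) (‖x‖ ^ (-τ) - ‖y‖ ^ (-τ))`. Since `n ≥ 2`, `z` and `y`
lie on a great circle of the sphere of radius `‖y‖`, joined by an arc of length at most `π ‖y‖`,
on which the gradient is at most `C ‖y‖ ^ (-τ - 1)`; this contributes `π C ‖y‖ ^ (-τ)`. Both
terms are controlled by `‖x‖ ^ (-τ) ≤ R₁ ^ (-τ)`, and this bound tends to `0` at infinity,
which is the Cauchy criterion.
-/

open MeasureTheory Filter Metric
open Module Real Set Topology
open scoped RealInnerProductSpace

section Sphere

variable {E : Type*} [NormedAddCommGroup E] [InnerProductSpace ℝ E]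

theorem norm_smul_add_smul_eq_one {u w : E} (hu : ‖u‖ = 1) (hw : ‖w‖ = 1) (huw : ⟪u, w⟫ = 0)
    {a b : ℝ} (hab : a ^ 2 + b ^ 2 = 1) : ‖a • u + b • w‖ = 1 := by
  have h := norm_add_sq_eq_norm_sq_add_norm_sq_real
    (by rw [real_inner_smul_left, real_inner_smul_right, huw, mul_zero, mul_zero] :
      ⟪a • u, b • w⟫ = 0)
  rw [norm_smul, norm_smul, hu, hw, mul_one, mul_one, norm_eq_abs, norm_eq_abs,
    abs_mul_abs_self, abs_mul_abs_self] at h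
  nlinarith [norm_nonneg (a • u + b • w)]

theorem exists_ne_zero_inner_eq_zero [FiniteDimensional ℝ E] (hE : 2 ≤ finrank ℝ E) (u : E) :
    ∃ q : E, q ≠ 0 ∧ ⟪u, q⟫ = 0 := by
  have hspan : finrank ℝ (ℝ ∙ u) ≤ 1 := (finrank_span_le_card {u}).trans (by simp)
  have hpos : 0 < finrank ℝ (ℝ ∙ u)ᗮ := by
    have := Submodule.finrank_add_finrank_orthogonal (ℝ ∙ u)
    omega
  obtain ⟨⟨q, hq⟩, hq0⟩ := finrank_pos_iff_exists_ne_zero.1 hpos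
  exact ⟨q, by simpa using hq0, hq u (Submodule.mem_span_singleton_self u)⟩

theorem exists_unit_orthogonal_eq_norm_smul [FiniteDimensional ℝ E] (hE : 2 ≤ finrank ℝ E)
    {u p : E} (hup : ⟪u, p⟫ = 0) : ∃ w : E, ‖w‖ = 1 ∧ ⟪u, w⟫ = 0 ∧ p = ‖p‖ • w := by
  obtain ⟨q, hq0, huq, hpq⟩ : ∃ q : E, q ≠ 0 ∧ ⟪u, q⟫ = 0 ∧ p = ‖p‖ • ‖q‖⁻¹ • q := by
    rcases eq_or_ne p 0 with rfl | hp0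
    · obtain ⟨q, hq0, huq⟩ := exists_ne_zero_inner_eq_zero hE u
      exact ⟨q, hq0, huq, by simp⟩
    · exact ⟨p, hp0, hup, by rw [smul_smul, mul_inv_cancel₀ (norm_ne_zero_iff.2 hp0), one_smul]⟩
  exact ⟨‖q‖⁻¹ • q, norm_smul_inv_norm hq0, by rw [real_inner_smul_right, huq, mul_zero], hpq⟩

theorem exists_eq_cos_smul_add_sin_smul [FiniteDimensional ℝ E] (hE : 2 ≤ finrank ℝ E)
    {u v : E} (hu : ‖u‖ = 1) (hv : ‖v‖ = 1) :
    ∃ (w : E) (θ : ℝ), ‖w‖ = 1 ∧ ⟪u, w⟫ = 0 ∧ θ ∈ Icc 0 π ∧ v = cos θ • u + sin θ • w := by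
  set c := ⟪u, v⟫
  set p := v - c • u
  have hup : ⟪u, p⟫ = 0 := by
    rw [inner_sub_right, real_inner_smul_right, real_inner_self_eq_norm_sq, hu]
    ring
  have hp : ‖p‖ ^ 2 = 1 - c ^ 2 := by
    have h := norm_add_sq_eq_norm_sq_add_norm_sq_real
      (by rw [real_inner_smul_left, hup, mul_zero] : ⟪c • u, p⟫ = 0)
    rw [add_sub_cancel, hv, norm_smul, hu, norm_eq_abs] at h
    simp only [mul_one, abs_mul_abs_self] at h
    linarith
  have hc : |c| ≤ 1 := by simpa [hu, hv] using abs_real_inner_le_norm u v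
  obtain ⟨w, hw, huw, hpw⟩ := exists_unit_orthogonal_eq_norm_smul hE hup
  refine ⟨w, arccos c, hw, huw, ⟨arccos_nonneg c, arccos_le_pi c⟩, ?_⟩
  rw [cos_arccos (abs_le.1 hc).1 (abs_le.1 hc).2, sin_arccos, ← hp, sqrt_sq (norm_nonneg p),
    ← hpw, add_sub_cancel]

end Sphere

section MeanValue

variable {E F : Type*} [NormedAddCommGroup E] [NormedSpace ℝ E] [NormedAddCommGroup F]
  [NormedSpace ℝ F]

theorem norm_image_sub_le_of_norm_fderiv_mul_le {h : E → F} {γ γ' : ℝ → E} {B B' : ℝ → ℝ}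
    {a b : ℝ} (hab : a ≤ b) (hγ : ∀ t ∈ Icc a b, HasDerivAt γ (γ' t) t)
    (hh : ∀ t ∈ Icc a b, DifferentiableAt ℝ h (γ t)) (hB : ∀ t ∈ Icc a b, HasDerivAt B (B' t) t)
    (hle : ∀ t ∈ Icc a b, ‖fderiv ℝ h (γ t)‖ * ‖γ' t‖ ≤ B' t) :
    ‖h (γ b) - h (γ a)‖ ≤ B b - B a := by
  have hhγ : ∀ t ∈ Icc a b,
      HasDerivAt (fun s => h (γ s) - h (γ a)) (fderiv ℝ h (γ t) (γ' t)) t :=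
    fun t ht => ((hh t ht).hasFDerivAt.comp_hasDerivAt t (hγ t ht)).sub_const _
  have hB₀ : ∀ t ∈ Icc a b, HasDerivAt (fun s => B s - B a) (B' t) t :=
    fun t ht => (hB t ht).sub_const _
  exact image_norm_le_of_norm_deriv_right_le_deriv_boundary'
    (fun t ht => (hhγ t ht).continuousAt.continuousWithinAt)
    (fun t ht => (hhγ t (Ico_subset_Icc_self ht)).hasDerivWithinAt) (by simp)
    (fun t ht => (hB₀ t ht).continuousAt.continuousWithinAt)
    (fun t ht => (hB₀ t (Ico_subset_Icc_self ht)).hasDerivWithinAt)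
    (fun t ht => ((fderiv ℝ h (γ t)).le_opNorm _).trans (hle t (Ico_subset_Icc_self ht)))
    ⟨hab, le_rfl⟩

theorem norm_smul_sub_smul_le_of_norm_fderiv_le_rpow {h : E → F} {R τ C : ℝ} (hR : 0 < R)
    (hτ : τ ≠ 0) (hdiff : ∀ x : E, R ≤ ‖x‖ → DifferentiableAt ℝ h x)
    (hbound : ∀ x : E, R ≤ ‖x‖ → ‖fderiv ℝ h x‖ ≤ C * ‖x‖ ^ (-τ - 1))
    {u : E} (hu : ‖u‖ = 1) {a b : ℝ} (ha : R ≤ a) (hab : a ≤ b) :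
    ‖h (b • u) - h (a • u)‖ ≤ C / τ * (a ^ (-τ) - b ^ (-τ)) := by
  have hnorm : ∀ r ∈ Icc a b, ‖r • u‖ = r := fun r hr => by
    rw [norm_smul, hu, mul_one, norm_eq_abs, abs_of_pos (hR.trans_le (ha.trans hr.1))]
  have hB : ∀ r ∈ Icc a b,
      HasDerivAt (fun s => -(C / τ * s ^ (-τ))) (C * r ^ (-τ - 1)) r := fun r hr => by
    have hd := (hasDerivAt_rpow_const (p := -τ)
      (Or.inl (hR.trans_le (ha.trans hr.1)).ne')).const_mul (-(C / τ))
    simp only [neg_mul, mul_neg, neg_neg] at hd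
    rwa [← mul_assoc, div_mul_cancel₀ C hτ] at hd
  have key := norm_image_sub_le_of_norm_fderiv_mul_le hab
    (fun r _ => by simpa using (hasDerivAt_id r).smul_const u)
    (fun r hr => hdiff _ ((hnorm r hr).symm ▸ ha.trans hr.1)) hB
    (fun r hr => by
      rw [hu, mul_one]
      have := hbound _ ((hnorm r hr).symm ▸ ha.trans hr.1)
      rwa [hnorm r hr] at this)
  exact key.trans_eq (by ring)

end MeanValue

section Oscillation

variable {E F : Type*} [NormedAddCommGroup E] [InnerProductSpace ℝ E] [FiniteDimensional ℝ E]
  [NormedAddCommGroup F] [NormedSpace ℝ F]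

theorem norm_sub_le_of_norm_fderiv_le_on_sphere (hE : 2 ≤ finrank ℝ E) {h : E → F} {S M : ℝ}
    (hdiff : ∀ z : E, ‖z‖ = S → DifferentiableAt ℝ h z)
    (hbound : ∀ z : E, ‖z‖ = S → ‖fderiv ℝ h z‖ ≤ M) {x y : E} (hx : ‖x‖ = S)
    (hy : ‖y‖ = S) : ‖h x - h y‖ ≤ π * S * M := by
  rcases (norm_nonneg x).eq_or_lt with hx0 | hx0
  · obtain rfl : S = 0 := hx ▸ hx0.symm
    rw [norm_eq_zero.1 hx, norm_eq_zero.1 hy]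
    simp
  have hS : 0 < S := hx ▸ hx0
  have hy0 : y ≠ 0 := norm_pos_iff.1 (hy ▸ hS)
  set u := ‖x‖⁻¹ • x
  set v := ‖y‖⁻¹ • y
  have hu : ‖u‖ = 1 := norm_smul_inv_norm (norm_pos_iff.1 hx0)
  have hv : ‖v‖ = 1 := norm_smul_inv_norm hy0
  have hxu : x = S • u := by
    rw [← hx, smul_smul, mul_inv_cancel₀ hx0.ne', one_smul]
  have hyv : y = S • v := by
    rw [← hy, smul_smul, mul_inv_cancel₀ (norm_ne_zero_iff.2 hy0), one_smul]
  obtain ⟨w, θ, hw, huw, hθ, hvuw⟩ := exists_eq_cos_smul_add_sin_smul hE hu hv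
  have hM : 0 ≤ M := (norm_nonneg _).trans (hbound x hx)
  have hnorm : ∀ a b : ℝ, a ^ 2 + b ^ 2 = 1 → ‖S • (a • u + b • w)‖ = S := fun a b hab => by
    rw [norm_smul, norm_smul_add_smul_eq_one hu hw huw hab, mul_one, norm_eq_abs, abs_of_pos hS]
  have hγ : ∀ t : ℝ, HasDerivAt (fun s => S • (cos s • u + sin s • w))
      (S • (-sin t • u + cos t • w)) t := fun t =>
    (((hasDerivAt_cos t).smul_const u).add ((hasDerivAt_sin t).smul_const w)).const_smul S
  have key := norm_image_sub_le_of_norm_fderiv_mul_le (B := fun t => M * S * t) hθ.1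
    (fun t _ => hγ t) (fun t _ => hdiff _ (hnorm _ _ (cos_sq_add_sin_sq t)))
    (fun t _ => by simpa using (hasDerivAt_id t).const_mul (M * S))
    (fun t _ => by
      rw [hnorm _ _ (by rw [neg_sq, sin_sq_add_cos_sq])]
      exact mul_le_mul_of_nonneg_right (hbound _ (hnorm _ _ (cos_sq_add_sin_sq t))) hS.le)
  have hγθ : S • (cos θ • u + sin θ • w) = y := by rw [← hvuw, ← hyv]
  have hγ0 : S • (cos 0 • u + sin 0 • w) = x := by simp [hxu]
  rw [← hγθ, ← hγ0, norm_sub_rev]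
  refine key.trans ?_
  have := mul_le_mul_of_nonneg_left hθ.2 (mul_nonneg hM hS.le)
  linarith

theorem norm_sub_le_of_norm_fderiv_le_rpow (hE : 2 ≤ finrank ℝ E) {h : E → F} {R τ C : ℝ}
    (hR : 0 < R) (hτ : 0 < τ) (hC : 0 ≤ C)
    (hdiff : ∀ x : E, R ≤ ‖x‖ → DifferentiableAt ℝ h x)
    (hbound : ∀ x : E, R ≤ ‖x‖ → ‖fderiv ℝ h x‖ ≤ C * ‖x‖ ^ (-τ - 1))
    {x y : E} (hx : R ≤ ‖x‖) (hxy : ‖x‖ ≤ ‖y‖) :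
    ‖h x - h y‖ ≤ (π + 1 / τ) * C * ‖x‖ ^ (-τ) := by
  have hx0 : 0 < ‖x‖ := hR.trans_le hx
  have hy0 : 0 < ‖y‖ := hx0.trans_le hxy
  set u := ‖x‖⁻¹ • x
  have hu : ‖u‖ = 1 := norm_smul_inv_norm (norm_pos_iff.1 hx0)
  have hxu : ‖x‖ • u = x := by rw [smul_smul, mul_inv_cancel₀ hx0.ne', one_smul]
  have hzy : ‖‖y‖ • u‖ = ‖y‖ := by rw [norm_smul, hu, mul_one, norm_norm]
  have radial := norm_smul_sub_smul_le_of_norm_fderiv_le_rpow hR hτ.ne' hdiff hbound hu hx hxy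
  rw [hxu] at radial
  have tangential := norm_sub_le_of_norm_fderiv_le_on_sphere hE (M := C * ‖y‖ ^ (-τ - 1))
    (fun z hz => hdiff z (hz ▸ hx.trans hxy)) (fun z hz => hz ▸ hbound z (hz ▸ hx.trans hxy))
    hzy rfl
  have hpow : ‖y‖ * ‖y‖ ^ (-τ - 1) = ‖y‖ ^ (-τ) := by
    rw [rpow_sub_one hy0.ne', mul_div_cancel₀ _ hy0.ne']
  have hyx : ‖y‖ ^ (-τ) ≤ ‖x‖ ^ (-τ) := rpow_le_rpow_of_nonpos hx0 hxy (by linarith)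
  calc ‖h x - h y‖ ≤ ‖h (‖y‖ • u) - h x‖ + ‖h (‖y‖ • u) - h y‖ := by
        rw [norm_sub_rev (h _) (h x)]
        exact norm_sub_le_norm_sub_add_norm_sub _ _ _
    _ ≤ C / τ * (‖x‖ ^ (-τ) - ‖y‖ ^ (-τ)) + π * ‖y‖ * (C * ‖y‖ ^ (-τ - 1)) :=
        add_le_add radial tangential
    _ = C / τ * (‖x‖ ^ (-τ) - ‖y‖ ^ (-τ)) + π * C * ‖y‖ ^ (-τ) := by rw [← hpow]; ring
    _ ≤ (π + 1 / τ) * C * ‖x‖ ^ (-τ) := by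
        have hπ := mul_le_mul_of_nonneg_left hyx (by positivity : 0 ≤ π * C)
        have hY : 0 ≤ C / τ * ‖y‖ ^ (-τ) := by positivity
        linear_combination hπ + hY

end Oscillation

theorem cauchy_map_cocompact_of_dist_le {E α : Type*} [NormedAddCommGroup E] [ProperSpace E]
    [NoncompactSpace E] [PseudoMetricSpace α] {h : E → α} {ω : ℝ → ℝ} {R : ℝ}
    (hω : Tendsto ω atTop (𝓝 0))
    (hdist : ∀ x y : E, R ≤ ‖x‖ → ‖x‖ ≤ ‖y‖ → dist (h x) (h y) ≤ ω ‖x‖) :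
    Cauchy (map h (cocompact E)) := by
  have hmin : Tendsto (fun p : E × E => min ‖p.1‖ ‖p.2‖) (cocompact E ×ˢ cocompact E) atTop :=
    tendsto_inf_atTop _ (tendsto_norm_cocompact_atTop.comp tendsto_fst)
      (tendsto_norm_cocompact_atTop.comp tendsto_snd)
  refine cauchy_map_iff'.2 (tendsto_uniformity_iff_dist_tendsto_zero.2 ?_)
  refine squeeze_zero' (.of_forall fun _ => dist_nonneg) ?_ (hω.comp hmin)
  filter_upwards [hmin.eventually_ge_atTop R] with ⟨x, y⟩ hR
  rcases le_total ‖x‖ ‖y‖ with hxy | hyx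
  · simpa [min_eq_left hxy] using hdist x y (min_eq_left hxy ▸ hR) hxy
  · simpa [min_eq_right hyx, dist_comm] using hdist y x (min_eq_right hyx ▸ hR) hyx

/-- uniform oscillation estimate in the proof of Lemma 4. If
`h : ℝⁿ → ℝ` (with `n ≥ 2`) is differentiable on `E_R = {‖x‖ ≥ R}` with
`‖Dh(x)‖ ≤ C‖x‖^(-τ-1)` there, then for all `R₁ ≥ R` and all `x, y` with
`R₁ ≤ ‖x‖ ≤ ‖y‖` one has `|h x - h y| ≤ (π + 1/τ) C R₁^(-τ)`; in particular `h`
satisfies the Cauchy criterion at infinity. -/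
theorem lemma4_oscillation_estimate (n : ℕ) (hn : 2 ≤ n) (R τ C : ℝ)
    (hR : 0 < R) (hτ : 0 < τ) (hC : 0 ≤ C)
    (h : EuclideanSpace ℝ (Fin n) → ℝ)
    (hdiff : ∀ x : EuclideanSpace ℝ (Fin n), R ≤ ‖x‖ → DifferentiableAt ℝ h x)
    (hbound : ∀ x : EuclideanSpace ℝ (Fin n), R ≤ ‖x‖ →
      ‖fderiv ℝ h x‖ ≤ C * ‖x‖ ^ (-τ - 1)) :
    (∀ R₁ : ℝ, R ≤ R₁ → ∀ x y : EuclideanSpace ℝ (Fin n),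
        R₁ ≤ ‖x‖ → ‖x‖ ≤ ‖y‖ →
        |h x - h y| ≤ (Real.pi + 1 / τ) * C * R₁ ^ (-τ)) ∧
    Cauchy (Filter.map h (cocompact (EuclideanSpace ℝ (Fin n)))) := by
  have hE : 2 ≤ finrank ℝ (EuclideanSpace ℝ (Fin n)) := by simpa using hn
  have hosc : ∀ x y : EuclideanSpace ℝ (Fin n), R ≤ ‖x‖ → ‖x‖ ≤ ‖y‖ →
      |h x - h y| ≤ (π + 1 / τ) * C * ‖x‖ ^ (-τ) := fun x y hx hxy =>
    norm_sub_le_of_norm_fderiv_le_rpow hE hR hτ hC hdiff hbound hx hxy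
  have : Nontrivial (EuclideanSpace ℝ (Fin n)) :=
    Module.nontrivial_of_finrank_pos (R := ℝ) (by omega)
  refine ⟨fun R₁ hR₁ x y hx hxy => (hosc x y (hR₁.trans hx) hxy).trans ?_, ?_⟩
  · exact mul_le_mul_of_nonneg_left (rpow_le_rpow_of_nonpos (hR.trans_le hR₁) hx (by linarith))
      (by positivity)
  · refine cauchy_map_cocompact_of_dist_le (ω := fun r => (π + 1 / τ) * C * r ^ (-τ)) ?_
      fun x y hx hxy => (Real.dist_eq _ _).trans_le (hosc x y hx hxy)
    simpa using (tendsto_rpow_neg_atTop hτ).const_mul ((π + 1 / τ) * C)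
end

section
/- Let n ≥ 2, R > 0, C ≥ 0, ε > 0 and τ > 0 with 2τ > n − 2. Let f : ℝⁿ → ℝ be continuously differentiable on E_R with f(x) ≥ ε, |f(x) − 1| ≤ C‖x‖^(−τ) and ‖∇f(x)‖ ≤ C‖x‖^(−τ−1) for all x ∈ E_R. Then ∫_{S_r} (1/f(x))·⟨∇f(x), ν(x)⟩ dσ(x) − ∫_{S_r} ⟨∇f(x), ν(x)⟩ dσ(x) tends to 0 as r → ∞; in particular, if one of the two families of sphere integrals converges as r → ∞, then so does the other, and to the same limit. -/
/-!
On `S_r` the two integrands differ by `(1/f - 1) ∂_ν f`, which is at most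
`(C r^{-τ} / ε) · C r^{-τ-1}` in absolute value, while `σ(S_r) = r^{n-1} σ(S_1)` by scaling.
So the difference of the integrals is `O(r^{n-2-2τ})`, which tends to `0` since `2τ > n - 2`.

That `σ(S_1)` is finite is seen by covering `S_1` with the radial projections of the pieces
`{|x_i| = 1} ∩ closedBall 0 n`: each lies in a union of two affine hyperplanes, where `μH[n-1]` is
a Haar measure, and the radial projection is `2`-Lipschitz outside the open unit ball.
-/

open MeasureTheory Filter Metric Module Set
open scoped ENNReal NNReal Pointwise

theorem IsCompact.hausdorffMeasure_finrank_lt_top_of_sub_mem {E : Type*} [NormedAddCommGroup E]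
    [NormedSpace ℝ E] [MeasurableSpace E] [BorelSpace E] (H : Submodule ℝ E)
    [FiniteDimensional ℝ H] {K : Set E} (hK : IsCompact K) (v : E) (hKH : ∀ x ∈ K, x - v ∈ H) :
    μH[finrank ℝ H] K < ⊤ := by
  set K' := (· - v) '' K
  have hK' : Subtype.val '' (Subtype.val ⁻¹' K' : Set H) = K' := by
    refine image_preimage_eq_of_subset ?_
    rintro _ ⟨x, hx, rfl⟩
    exact ⟨⟨_, hKH x hx⟩, rfl⟩
  calc μH[finrank ℝ H] K = μH[finrank ℝ H] K' :=
        ((IsometryEquiv.subRight v).isometry.hausdorffMeasure_image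
          (Or.inr (IsometryEquiv.subRight v).surjective) K).symm
    _ = μH[finrank ℝ H] (Subtype.val ⁻¹' K' : Set H) := by
        rw [← Isometry.hausdorffMeasure_image (f := ((↑) : H → E)) isometry_subtype_coe
          (Or.inl (Nat.cast_nonneg _)), hK']
    _ < ⊤ := IsCompact.measure_lt_top <|
        Subtype.isCompact_iff.mpr (hK'.symm ▸ hK.image (continuous_sub_right v))

namespace EuclideanSpace

theorem finrank_ker_proj_add_one {n : ℕ} (i : Fin n) :
    finrank ℝ (LinearMap.ker (proj i : EuclideanSpace ℝ (Fin n) →L[ℝ] ℝ).toLinearMap) + 1 = n := by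
  rw [Module.Dual.finrank_ker_add_one_of_ne_zero, finrank_euclideanSpace_fin]
  intro h
  simpa using LinearMap.congr_fun h (single i 1)

theorem hausdorffMeasure_coord_eq_inter_closedBall_lt_top {n : ℕ} (i : Fin n) (c ρ : ℝ) :
    μH[(n : ℝ) - 1] ({x : EuclideanSpace ℝ (Fin n) | x i = c} ∩ closedBall 0 ρ) < ⊤ := by
  set H := LinearMap.ker (proj i : EuclideanSpace ℝ (Fin n) →L[ℝ] ℝ).toLinearMap
  have hd : (n : ℝ) - 1 = finrank ℝ H := by
    rw [sub_eq_iff_eq_add]; exact_mod_cast (finrank_ker_proj_add_one i).symm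
  rw [hd]
  refine IsCompact.hausdorffMeasure_finrank_lt_top_of_sub_mem _ ?_ (single i c) ?_
  · exact (isCompact_closedBall 0 ρ).inter_left (isClosed_eq (by fun_prop) continuous_const)
  · rintro x ⟨hx : x i = c, -⟩
    simp [H, hx]

theorem hausdorffMeasure_abs_coord_eq_one_inter_closedBall_lt_top {n : ℕ} (i : Fin n) (ρ : ℝ) :
    μH[(n : ℝ) - 1] ({x : EuclideanSpace ℝ (Fin n) | |x i| = 1} ∩ closedBall 0 ρ) < ⊤ := by
  have hsplit : {x : EuclideanSpace ℝ (Fin n) | |x i| = 1} = {x | x i = 1} ∪ {x | x i = -1} := by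
    ext x; simp [abs_eq zero_le_one]
  rw [hsplit, union_inter_distrib_right]
  exact (measure_union_le _ _).trans_lt <| ENNReal.add_lt_top.mpr
    ⟨hausdorffMeasure_coord_eq_inter_closedBall_lt_top i 1 ρ,
      hausdorffMeasure_coord_eq_inter_closedBall_lt_top i (-1) ρ⟩

end EuclideanSpace

theorem lipschitzOnWith_inv_norm_smul {E : Type*} [NormedAddCommGroup E] [NormedSpace ℝ E] :
    LipschitzOnWith 2 (fun x : E => ‖x‖⁻¹ • x) {x | 1 ≤ ‖x‖} := by
  refine LipschitzOnWith.of_dist_le_mul fun x (hx : 1 ≤ ‖x‖) y (hy : 1 ≤ ‖y‖) => ?_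
  have hx0 : 0 < ‖x‖ := one_pos.trans_le hx
  have hy0 : 0 < ‖y‖ := one_pos.trans_le hy
  have hsplit : ‖x‖⁻¹ • x - ‖y‖⁻¹ • y = ‖x‖⁻¹ • (x - y) + (‖x‖⁻¹ - ‖y‖⁻¹) • y := by
    rw [smul_sub, sub_smul]; abel
  have hradial : ‖(‖x‖⁻¹ - ‖y‖⁻¹) • y‖ = |‖y‖ - ‖x‖| / ‖x‖ := by
    rw [norm_smul, Real.norm_eq_abs, inv_sub_inv hx0.ne' hy0.ne', abs_div,
      abs_of_pos (mul_pos hx0 hy0)]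
    field_simp
  rw [dist_eq_norm, dist_eq_norm, hsplit, NNReal.coe_ofNat]
  calc ‖‖x‖⁻¹ • (x - y) + (‖x‖⁻¹ - ‖y‖⁻¹) • y‖
      ≤ ‖x - y‖ / ‖x‖ + ‖x - y‖ / ‖x‖ := by
        refine (norm_add_le _ _).trans (add_le_add ?_ ?_)
        · rw [norm_smul, norm_inv, norm_norm, inv_mul_eq_div]
        · rw [hradial, abs_sub_comm]
          gcongr
          exact abs_norm_sub_norm_le x y
    _ ≤ 2 * ‖x - y‖ := by
        rw [← two_mul]
        gcongr
        exact div_le_self (norm_nonneg _) hx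

namespace EuclideanSpace

/-- A unit vector has a coordinate with `n x_i² ≥ 1`; rescaling it to `|x_i| = 1` lands in
`closedBall 0 n`. -/
theorem sphere_subset_image_inv_norm_smul {n : ℕ} :
    sphere (0 : EuclideanSpace ℝ (Fin n)) 1 ⊆
      (fun y => ‖y‖⁻¹ • y) '' ⋃ i, {y | |y i| = 1} ∩ closedBall 0 n := by
  intro x hx
  rw [mem_sphere_zero_iff_norm] at hx
  have hsum : ∑ j, x j ^ 2 = 1 := by
    simpa [hx] using (real_norm_sq_eq x).symm
  have : Nonempty (Fin n) := by
    by_contra h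
    simp [not_nonempty_iff.mp h] at hsum
  obtain ⟨i, -, hi⟩ : ∃ i ∈ Finset.univ, (1 : ℝ) ≤ n * x i ^ 2 := by
    refine Finset.exists_le_of_sum_le Finset.univ_nonempty ?_
    simp [← Finset.mul_sum, hsum]
  have hxi1 : |x i| ≤ 1 := by
    simpa [hx] using PiLp.norm_apply_le x i
  have hxi0 : 0 < |x i| := by
    refine abs_pos.mpr fun h => ?_
    norm_num [h] at hi
  refine ⟨|x i|⁻¹ • x, mem_iUnion.mpr ⟨i, ?_, ?_⟩, ?_⟩
  · simp [abs_mul, hxi0.ne']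
  · rw [mem_closedBall_zero_iff, norm_smul, norm_inv, Real.norm_eq_abs, abs_abs, hx, mul_one,
      inv_le_iff_one_le_mul₀ hxi0]
    nlinarith [sq_abs (x i)]
  · simp only [norm_smul, norm_inv, Real.norm_eq_abs, abs_abs, hx, mul_one, inv_inv, smul_smul,
      mul_inv_cancel₀ hxi0.ne', one_smul]

theorem hausdorffMeasure_sphere_one_lt_top {n : ℕ} (hn : 1 ≤ n) :
    μH[(n : ℝ) - 1] (sphere (0 : EuclideanSpace ℝ (Fin n)) 1) < ⊤ := by
  set U := ⋃ i, {y : EuclideanSpace ℝ (Fin n) | |y i| = 1} ∩ closedBall 0 n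
  have hd : 0 ≤ (n : ℝ) - 1 := sub_nonneg.mpr (by exact_mod_cast hn)
  have hlip : LipschitzOnWith 2 (fun y : EuclideanSpace ℝ (Fin n) => ‖y‖⁻¹ • y) U := by
    refine lipschitzOnWith_inv_norm_smul.mono (iUnion_subset fun i y hy => ?_)
    simpa [show |y i| = 1 from hy.1] using PiLp.norm_apply_le y i
  have hU : μH[(n : ℝ) - 1] U < ⊤ :=
    (measure_iUnion_fintype_le _ _).trans_lt <| ENNReal.sum_lt_top.mpr fun i _ =>
      hausdorffMeasure_abs_coord_eq_one_inter_closedBall_lt_top i n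
  calc _ ≤ μH[(n : ℝ) - 1] ((fun y => ‖y‖⁻¹ • y) '' U) :=
        measure_mono sphere_subset_image_inv_norm_smul
    _ ≤ ((2 : ℝ≥0) : ℝ≥0∞) ^ ((n : ℝ) - 1) * μH[(n : ℝ) - 1] U :=
        hlip.hausdorffMeasure_image_le hd
    _ < ⊤ := ENNReal.mul_lt_top (ENNReal.rpow_lt_top_of_nonneg hd ENNReal.coe_ne_top) hU

end EuclideanSpace

theorem hausdorffMeasure_sphere_zero_eq {E : Type*} [NormedAddCommGroup E] [NormedSpace ℝ E]
    [MeasurableSpace E] [BorelSpace E] {d r : ℝ} (hd : 0 ≤ d) (hr : 0 < r) :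
    μH[d] (sphere (0 : E) r) = ENNReal.ofReal (r ^ d) * μH[d] (sphere (0 : E) 1) := by
  have hsphere : r • sphere (0 : E) 1 = sphere 0 r := by
    simp [smul_sphere' hr.ne', abs_of_pos hr]
  rw [← hsphere, Measure.hausdorffMeasure_smul₀ hd hr.ne', ENNReal.smul_def, smul_eq_mul,
    ← ENNReal.ofReal_coe_nnreal, NNReal.coe_rpow, coe_nnnorm, Real.norm_of_nonneg hr.le]

theorem abs_setIntegral_one_div_mul_sub_setIntegral_le {X : Type*} [TopologicalSpace X]
    [MeasurableSpace X] [OpensMeasurableSpace X] {μ : Measure X} {K : Set X}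
    (hK : MeasurableSet K) (hKμ : μ K < ⊤) {f g : X → ℝ} (hf : ContinuousOn f K)
    (hg : ContinuousOn g K) {ε a b : ℝ} (hε : 0 < ε) (hfε : ∀ x ∈ K, ε ≤ f x)
    (hfa : ∀ x ∈ K, |f x - 1| ≤ a) (hgb : ∀ x ∈ K, |g x| ≤ b) :
    |∫ x in K, 1 / f x * g x ∂μ - ∫ x in K, g x ∂μ| ≤ a / ε * b * μ.real K := by
  have hf0 : ∀ x ∈ K, 0 < f x := fun x hx => hε.trans_le (hfε x hx)
  have hdiff : ∀ x ∈ K, |1 / f x * g x - g x| ≤ a / ε * b := by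
    intro x hx
    rw [show 1 / f x * g x - g x = (1 - f x) / f x * g x by field_simp [(hf0 x hx).ne'],
      abs_mul, abs_div, abs_of_pos (hf0 x hx), abs_sub_comm]
    have ha : 0 ≤ a := (abs_nonneg _).trans (hfa x hx)
    gcongr
    exacts [hfa x hx, hfε x hx, hgb x hx]
  have hg_int : IntegrableOn g K μ :=
    .of_bound hKμ (hg.aestronglyMeasurable hK) b (ae_restrict_of_forall_mem hK hgb)
  have hdiff_int : IntegrableOn (fun x => 1 / f x * g x - g x) K μ := by
    refine .of_bound hKμ (ContinuousOn.aestronglyMeasurable ?_ hK) _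
      (ae_restrict_of_forall_mem hK hdiff)
    exact ((continuousOn_const.div hf fun x hx => (hf0 x hx).ne').mul hg).sub hg
  have hI_int : IntegrableOn (fun x => 1 / f x * g x) K μ :=
    (hdiff_int.add hg_int).congr_fun (fun x _ => sub_add_cancel _ _) hK
  rw [← integral_sub hI_int hg_int]
  exact norm_setIntegral_le_of_norm_le_const hKμ fun x hx =>
    (Real.norm_eq_abs _).trans_le (hdiff x hx)

theorem continuousOn_inner_gradient_inv_norm_smul {E : Type*} [NormedAddCommGroup E]
    [InnerProductSpace ℝ E] [CompleteSpace E] {f : E → ℝ} {s : Set E}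
    (hf : ContinuousOn (fderiv ℝ f) s) (hs : (0 : E) ∉ s) :
    ContinuousOn (fun x => inner ℝ (gradient f x) (‖x‖⁻¹ • x)) s := by
  refine ((InnerProductSpace.toDual ℝ E).symm.continuous.comp_continuousOn hf).inner ?_
  refine (continuous_norm.continuousOn.inv₀ fun x hx => ?_).smul continuousOn_id
  exact norm_ne_zero_iff.mpr (ne_of_mem_of_not_mem hx hs)

theorem abs_inner_inv_norm_smul_le {E : Type*} [NormedAddCommGroup E] [InnerProductSpace ℝ E]
    (v x : E) : |inner ℝ v (‖x‖⁻¹ • x)| ≤ ‖v‖ := by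
  refine (abs_real_inner_le_norm _ _).trans (mul_le_of_le_one_right (norm_nonneg _) ?_)
  rcases eq_or_ne x 0 with rfl | hx
  · simp
  · exact (norm_smul_inv_norm hx).le

theorem lemma2_lee_form_boundary_term_general (n : ℕ) (hn : 2 ≤ n) (R C ε τ : ℝ)
    (hε : 0 < ε)
    (hτn : (n : ℝ) - 2 < 2 * τ)
    (f : EuclideanSpace ℝ (Fin n) → ℝ)
    (hdiff : ∀ x : EuclideanSpace ℝ (Fin n), R ≤ ‖x‖ → DifferentiableAt ℝ f x)
    (hC1 : ContinuousOn (fun x => fderiv ℝ f x) {x : EuclideanSpace ℝ (Fin n) | R ≤ ‖x‖})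
    (hf_low : ∀ x : EuclideanSpace ℝ (Fin n), R ≤ ‖x‖ → ε ≤ f x)
    (hf_one : ∀ x : EuclideanSpace ℝ (Fin n), R ≤ ‖x‖ → |f x - 1| ≤ C * ‖x‖ ^ (-τ))
    (hf_grad : ∀ x : EuclideanSpace ℝ (Fin n), R ≤ ‖x‖ →
      ‖gradient f x‖ ≤ C * ‖x‖ ^ (-τ - 1)) :
    Tendsto
      (fun r : ℝ =>
        (∫ x in Metric.sphere (0 : EuclideanSpace ℝ (Fin n)) r,
            (1 / f x) * (inner ℝ (gradient f x) (‖x‖⁻¹ • x) : ℝ) ∂(μH[(n : ℝ) - 1])) -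
        ∫ x in Metric.sphere (0 : EuclideanSpace ℝ (Fin n)) r,
            (inner ℝ (gradient f x) (‖x‖⁻¹ • x) : ℝ) ∂(μH[(n : ℝ) - 1]))
      atTop (nhds 0) ∧
    ∀ L : ℝ,
      Tendsto
        (fun r : ℝ =>
          ∫ x in Metric.sphere (0 : EuclideanSpace ℝ (Fin n)) r,
            (1 / f x) * (inner ℝ (gradient f x) (‖x‖⁻¹ • x) : ℝ) ∂(μH[(n : ℝ) - 1]))
        atTop (nhds L) ↔
      Tendsto
        (fun r : ℝ =>
          ∫ x in Metric.sphere (0 : EuclideanSpace ℝ (Fin n)) r,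
            (inner ℝ (gradient f x) (‖x‖⁻¹ • x) : ℝ) ∂(μH[(n : ℝ) - 1]))
        atTop (nhds L) := by
  have hd : 0 ≤ (n : ℝ) - 1 := sub_nonneg.mpr (by exact_mod_cast (by omega : 1 ≤ n))
  have hunit := EuclideanSpace.hausdorffMeasure_sphere_one_lt_top (n := n) (by omega)
  set c := (μH[(n : ℝ) - 1] : Measure (EuclideanSpace ℝ (Fin n))).real (sphere 0 1)
  have hdecay :
      Tendsto (fun r : ℝ => C / ε * C * c * r ^ ((n : ℝ) - 2 - 2 * τ)) atTop (nhds 0) := by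
    have h := (tendsto_rpow_neg_atTop (by linarith : 0 < 2 * τ + 2 - n)).const_mul (C / ε * C * c)
    rw [mul_zero] at h
    refine h.congr fun r => ?_
    rw [show (n : ℝ) - 2 - 2 * τ = -(2 * τ + 2 - n) by ring]
  refine (fun h => ⟨h, fun L => tendsto_iff_of_dist
    (by simpa only [dist_eq_norm, norm_zero] using h.norm)⟩) ?_
  refine squeeze_zero_norm' ?_ hdecay
  filter_upwards [eventually_ge_atTop R, eventually_gt_atTop 0] with r hRr hr
  have hnorm : ∀ x ∈ sphere (0 : EuclideanSpace ℝ (Fin n)) r, ‖x‖ = r :=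
    fun x hx => mem_sphere_zero_iff_norm.mp hx
  have hE : sphere (0 : EuclideanSpace ℝ (Fin n)) r ⊆ {x | R ≤ ‖x‖} :=
    fun x hx => show R ≤ ‖x‖ from hnorm x hx ▸ hRr
  have hσr := hausdorffMeasure_sphere_zero_eq (E := EuclideanSpace ℝ (Fin n)) hd hr
  calc _ ≤ C * r ^ (-τ) / ε * (C * r ^ (-τ - 1)) *
        (μH[(n : ℝ) - 1] : Measure (EuclideanSpace ℝ (Fin n))).real (sphere 0 r) :=
        abs_setIntegral_one_div_mul_sub_setIntegral_le isClosed_sphere.measurableSet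
          (by rw [hσr]; exact ENNReal.mul_lt_top ENNReal.ofReal_lt_top hunit)
          (fun x hx => (hdiff x (hE hx)).continuousAt.continuousWithinAt)
          (continuousOn_inner_gradient_inv_norm_smul (hC1.mono hE) (by simp [hr.ne]))
          hε (fun x hx => hf_low x (hE hx))
          (fun x hx => hnorm x hx ▸ hf_one x (hE hx))
          (fun x hx => hnorm x hx ▸ (abs_inner_inv_norm_smul_le _ _).trans (hf_grad x (hE hx)))
    _ = C / ε * C * c * r ^ ((n : ℝ) - 2 - 2 * τ) := by
        rw [measureReal_def, hσr, ENNReal.toReal_mul, ENNReal.toReal_ofReal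
          (Real.rpow_nonneg hr.le _), show (n : ℝ) - 2 - 2 * τ = -τ + (-τ - 1) + ((n : ℝ) - 1)
          by ring, Real.rpow_add hr, Real.rpow_add hr, ← measureReal_def]
        ring

/-- Lemma 2 of the paper, in asymptotic coordinates. Let
`f : ℝⁿ → ℝ` be `C¹` on `E_R = {‖x‖ ≥ R}` with `f ≥ ε > 0`,
`|f - 1| = O(‖x‖^(-τ))` and `‖∇f‖ = O(‖x‖^(-τ-1))`, where `2τ > n - 2`. Then
`∫_{S_r} (df/f)(ν) dσ - ∫_{S_r} df(ν) dσ → 0` as `r → ∞`; in particular one of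
the two families of sphere integrals converges iff the other does, and to the
same limit. -/
theorem lemma2_lee_form_boundary_term (n : ℕ) (hn : 2 ≤ n) (R C ε τ : ℝ)
    (hR : 0 < R) (hC : 0 ≤ C) (hε : 0 < ε) (hτ : 0 < τ)
    (hτn : (n : ℝ) - 2 < 2 * τ)
    (f : EuclideanSpace ℝ (Fin n) → ℝ)
    (hdiff : ∀ x : EuclideanSpace ℝ (Fin n), R ≤ ‖x‖ → DifferentiableAt ℝ f x)
    (hC1 : ContinuousOn (fun x => fderiv ℝ f x) {x : EuclideanSpace ℝ (Fin n) | R ≤ ‖x‖})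
    (hf_low : ∀ x : EuclideanSpace ℝ (Fin n), R ≤ ‖x‖ → ε ≤ f x)
    (hf_one : ∀ x : EuclideanSpace ℝ (Fin n), R ≤ ‖x‖ → |f x - 1| ≤ C * ‖x‖ ^ (-τ))
    (hf_grad : ∀ x : EuclideanSpace ℝ (Fin n), R ≤ ‖x‖ →
      ‖gradient f x‖ ≤ C * ‖x‖ ^ (-τ - 1)) :
    Tendsto
      (fun r : ℝ =>
        (∫ x in Metric.sphere (0 : EuclideanSpace ℝ (Fin n)) r,
            (1 / f x) * (inner ℝ (gradient f x) (‖x‖⁻¹ • x) : ℝ) ∂(μH[(n : ℝ) - 1])) -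
        ∫ x in Metric.sphere (0 : EuclideanSpace ℝ (Fin n)) r,
            (inner ℝ (gradient f x) (‖x‖⁻¹ • x) : ℝ) ∂(μH[(n : ℝ) - 1]))
      atTop (nhds 0) ∧
    ∀ L : ℝ,
      Tendsto
        (fun r : ℝ =>
          ∫ x in Metric.sphere (0 : EuclideanSpace ℝ (Fin n)) r,
            (1 / f x) * (inner ℝ (gradient f x) (‖x‖⁻¹ • x) : ℝ) ∂(μH[(n : ℝ) - 1]))
        atTop (nhds L) ↔
      Tendsto
        (fun r : ℝ =>
          ∫ x in Metric.sphere (0 : EuclideanSpace ℝ (Fin n)) r,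
            (inner ℝ (gradient f x) (‖x‖⁻¹ • x) : ℝ) ∂(μH[(n : ℝ) - 1]))
        atTop (nhds L) :=
  lemma2_lee_form_boundary_term_general n hn R C ε τ hε hτn f hdiff hC1 hf_low hf_one hf_grad
end

section
/- Let n ≥ 3, R > 0, C ≥ 0 and τ > (n−2)/2. Let a : ℝⁿ → Matrix (Fin n) (Fin n) ℝ be continuously differentiable on E_R with |a_{ij}(x)| ≤ C‖x‖^(−τ) and |∂_k a_{ij}(x)| ≤ C‖x‖^(−τ−1) for all indices i, j, k and all x ∈ E_R, and set g_{ij} = δ_{ij} + a_{ij}. Let f : ℝⁿ → ℝ be continuously differentiable on E_R with |f(x) − 1| ≤ C‖x‖^(−τ) and ‖∇f(x)‖ ≤ C‖x‖^(−τ−1) for all x ∈ E_R. Then 𝔪_r(f·g) − 𝔪_r(g) − (1−n)·∫_{S_r} ⟨∇f(x), ν(x)⟩ dσ(x) tends to 0 as r → ∞, where (f·g)_{ij} = f·g_{ij}. -/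
open MeasureTheory Filter Metric

/-- The mass surface integral at radius `r` of a matrix-valued field `G` on `ℝⁿ`:
`𝔪_r(G) = ∫_{S_r} Σ_{i,j} (∂_i G_{ij} - ∂_j G_{ii}) ν_j dσ`, where `σ` is the
`(n-1)`-dimensional Hausdorff measure and `ν(x) = x/‖x‖`. -/
noncomputable def massSurfaceIntegral (n : ℕ)
    (G : EuclideanSpace ℝ (Fin n) → Matrix (Fin n) (Fin n) ℝ) (r : ℝ) : ℝ :=
  ∫ x in Metric.sphere (0 : EuclideanSpace ℝ (Fin n)) r,
    ∑ i : Fin n, ∑ j : Fin n,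
      (fderiv ℝ (fun y => G y i j) x (EuclideanSpace.single i 1) -
        fderiv ℝ (fun y => G y i i) x (EuclideanSpace.single j 1)) * (x j / ‖x‖)
    ∂(μH[(n : ℝ) - 1])

/-!
Write `g = 1 + a` and let `Φ(G)` denote the integrand of `𝔪_r(G)`. The product rule gives
`Φ(f • G) = f Φ(G) + Σᵢⱼ (Gᵢⱼ ∂ᵢf - Gᵢᵢ ∂ⱼf) νⱼ`, and for `G = 1` the last sum is
`(1 - n) ⟨∇f, ν⟩`. So the integrand of `𝔪_r(f g) - 𝔪_r(g) - (1 - n) ∫ ⟨∇f, ν⟩` is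
`(f - 1) Φ(a) + Σᵢⱼ (aᵢⱼ ∂ᵢf - aᵢᵢ ∂ⱼf) νⱼ = O(r^(-2τ-1))`, while `σ(S_r) = σ(S_1) r^(n-1)`;
the integral is therefore `O(r^(n-2-2τ)) → 0`.

That `σ(S_1) < ∞` is a local statement: near a unit vector `v` the sphere is the image of a ball
of the hyperplane `v^⊥` under the `2`-Lipschitz map `w ↦ (v + w) / ‖v + w‖`.
-/

open Set Topology NormedSpace Module
open scoped Pointwise

theorem NormedSpace.lipschitzOnWith_normalize {V : Type*} [NormedAddCommGroup V] [NormedSpace ℝ V] :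
    LipschitzOnWith 2 (normalize : V → V) {x | 1 ≤ ‖x‖} := by
  refine LipschitzOnWith.of_dist_le_mul fun x hx y hy => ?_
  simp only [mem_ofPred_eq] at hx hy
  have hx0 : 0 < ‖x‖ := by linarith
  have hy0 : 0 < ‖y‖ := by linarith
  have hsplit : normalize x - normalize y = ‖x‖⁻¹ • (x - y) + (‖x‖⁻¹ - ‖y‖⁻¹) • y := by
    simp only [normalize, smul_sub, sub_smul]; abel
  rw [dist_eq_norm, dist_eq_norm, hsplit, NNReal.coe_ofNat]
  calc ‖‖x‖⁻¹ • (x - y) + (‖x‖⁻¹ - ‖y‖⁻¹) • y‖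
      ≤ ‖x‖⁻¹ * ‖x - y‖ + |‖x‖⁻¹ - ‖y‖⁻¹| * ‖y‖ := by
        refine (norm_add_le _ _).trans_eq ?_
        rw [norm_smul, norm_smul, norm_inv, norm_norm, Real.norm_eq_abs]
    _ = ‖x‖⁻¹ * (‖x - y‖ + |‖y‖ - ‖x‖|) := by
        rw [inv_sub_inv hx0.ne' hy0.ne', abs_div, abs_mul, abs_of_pos hx0, abs_of_pos hy0]
        field_simp
    _ ≤ 1 * (‖x - y‖ + ‖x - y‖) := by
        gcongr
        · exact inv_le_one_of_one_le₀ hx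
        · rw [abs_sub_comm]; exact abs_norm_sub_norm_le x y
    _ = 2 * ‖x - y‖ := by ring

theorem norm_inner_inv_norm_smul_le {E : Type*} [NormedAddCommGroup E] [InnerProductSpace ℝ E]
    (v x : E) : ‖inner ℝ v (‖x‖⁻¹ • x)‖ ≤ ‖v‖ := by
  refine (norm_inner_le_norm _ _).trans (mul_le_of_le_one_right (norm_nonneg _) ?_)
  rw [norm_smul, norm_inv, norm_norm]
  exact inv_mul_le_one

theorem MeasureTheory.integral_sub_sub_const_mul {α : Type*} [MeasurableSpace α] {μ : Measure α}
    {φ₁ φ₂ φ₃ : α → ℝ} (c : ℝ) (h : Integrable (fun x => φ₁ x - φ₂ x - c * φ₃ x) μ)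
    (h₂ : Integrable φ₂ μ) (h₃ : Integrable φ₃ μ) :
    ∫ x, (φ₁ x - φ₂ x - c * φ₃ x) ∂μ = ∫ x, φ₁ x ∂μ - ∫ x, φ₂ x ∂μ - c * ∫ x, φ₃ x ∂μ := by
  have h₁ : Integrable φ₁ μ := ((h.add h₂).add (h₃.const_mul c)).congr
    (ae_of_all _ fun x => by simp only [Pi.add_apply]; ring)
  rw [← integral_const_mul, ← integral_sub h₁ h₂]
  exact integral_sub (h₁.sub h₂) (h₃.const_mul c)

section SphereScaling

variable {E : Type*} [NormedAddCommGroup E] [NormedSpace ℝ E] [MeasurableSpace E] [BorelSpace E]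

theorem hausdorffMeasure_sphere {d r : ℝ} (hd : 0 ≤ d) (hr : 0 < r) :
    μH[d] (sphere (0 : E) r) = ENNReal.ofReal (r ^ d) * μH[d] (sphere (0 : E) 1) := by
  have hsphere : r • sphere (0 : E) 1 = sphere 0 r := by
    rw [smul_sphere' hr.ne', smul_zero, Real.norm_of_nonneg hr.le, mul_one]
  rw [← hsphere, Measure.hausdorffMeasure_smul₀ hd hr.ne', ENNReal.smul_def, smul_eq_mul,
    ← ENNReal.ofReal_coe_nnreal, NNReal.coe_rpow, coe_nnnorm, Real.norm_of_nonneg hr.le]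

theorem measureReal_hausdorffMeasure_sphere {d r : ℝ} (hd : 0 ≤ d) (hr : 0 < r) :
    (μH[d] : Measure E).real (sphere 0 r) = r ^ d * (μH[d] : Measure E).real (sphere 0 1) := by
  rw [measureReal_def, measureReal_def, hausdorffMeasure_sphere hd hr,
    ENNReal.toReal_mul, ENNReal.toReal_ofReal (by positivity)]

end SphereScaling

section SphereMeasure

variable {E : Type*} [NormedAddCommGroup E] [InnerProductSpace ℝ E]

open RealInnerProductSpace

theorem sphere_inter_setOf_lt_inner_subset_image {v : E} (hv : ‖v‖ = 1) :
    sphere (0 : E) 1 ∩ {y | 1 / 2 < ⟪y, v⟫} ⊆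
      (fun w : (ℝ ∙ v)ᗮ => normalize (v + w)) '' closedBall 0 3 := by
  rintro y ⟨hy, hyv⟩
  rw [mem_sphere_zero_iff_norm] at hy
  simp only [mem_ofPred_eq] at hyv
  set t := ⟪y, v⟫
  have ht : 0 < t := by linarith
  refine ⟨⟨t⁻¹ • (y - t • v), ?_⟩, ?_, ?_⟩
  · rw [Submodule.mem_orthogonal_singleton_iff_inner_right, inner_smul_right, inner_sub_right,
      inner_smul_right, real_inner_self_eq_norm_sq, hv, real_inner_comm]
    ring
  · rw [mem_closedBall_zero_iff, Submodule.coe_norm, norm_smul, norm_inv, Real.norm_eq_abs,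
      abs_of_pos ht, inv_mul_le_iff₀ ht]
    calc ‖y - t • v‖ ≤ ‖y‖ + ‖t • v‖ := norm_sub_le _ _
      _ = 1 + t := by rw [norm_smul, hv, hy, Real.norm_eq_abs, abs_of_pos ht, mul_one]
      _ ≤ t * 3 := by linarith
  · have : v + t⁻¹ • (y - t • v) = t⁻¹ • y := by
      rw [smul_sub, smul_smul, inv_mul_cancel₀ ht.ne', one_smul]; abel
    simp only [this, normalize_smul_of_pos (inv_pos.mpr ht), normalize_eq_self_of_norm_eq_one hy]

theorem lipschitzWith_normalize_add_orthogonal {v : E} (hv : ‖v‖ = 1) :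
    LipschitzWith 2 (fun w : (ℝ ∙ v)ᗮ => normalize (v + w)) := by
  have hmaps : MapsTo (fun w : (ℝ ∙ v)ᗮ => v + (w : E)) univ {x | 1 ≤ ‖x‖} := by
    intro w _
    have hw : ⟪(w : E), v⟫ = 0 :=
      Submodule.inner_left_of_mem_orthogonal (Submodule.mem_span_singleton_self v) w.2
    have := real_inner_le_norm (v + w) v
    rw [inner_add_left, hw, real_inner_self_eq_norm_sq, hv] at this
    simpa [hv] using this
  have h := NormedSpace.lipschitzOnWith_normalize.comp
    ((IsometryEquiv.addLeft v).isometry.comp isometry_subtype_coe).lipschitz.lipschitzOnWith hmaps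
  rw [mul_one, lipschitzOnWith_univ] at h
  exact h

variable [MeasurableSpace E] [BorelSpace E]

theorem hausdorffMeasure_unitSphere_lt_top [FiniteDimensional ℝ E] :
    μH[(finrank ℝ E : ℝ) - 1] (sphere (0 : E) 1) < ⊤ := by
  refine (isCompact_sphere 0 1).measure_lt_top_of_nhdsWithin fun v hv => ?_
  rw [mem_sphere_zero_iff_norm] at hv
  have hv0 : v ≠ 0 := norm_ne_zero_iff.mp (by rw [hv]; exact one_ne_zero)
  have hdim : (finrank ℝ (ℝ ∙ v)ᗮ : ℝ) = (finrank ℝ E : ℝ) - 1 := by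
    rw [← Submodule.finrank_add_finrank_orthogonal (ℝ ∙ v), finrank_span_singleton hv0]
    push_cast; ring
  refine ⟨sphere 0 1 ∩ {y | 1 / 2 < ⟪y, v⟫}, inter_mem_nhdsWithin _ (IsOpen.mem_nhds
    (isOpen_lt continuous_const (continuous_id.inner continuous_const)) ?_), ?_⟩
  · rw [mem_ofPred_eq, real_inner_self_eq_norm_sq, hv]; norm_num
  refine (measure_mono (sphere_inter_setOf_lt_inner_subset_image hv)).trans_lt ?_
  refine ((lipschitzWith_normalize_add_orthogonal hv).hausdorffMeasure_image_le
    (by rw [← hdim]; positivity) _).trans_lt ?_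
  rw [← hdim]
  exact ENNReal.mul_lt_top (ENNReal.rpow_lt_top_of_nonneg (by positivity) ENNReal.coe_ne_top)
    (isCompact_closedBall 0 3).measure_lt_top

variable [FiniteDimensional ℝ E] {n : ℕ}

theorem hausdorffMeasure_sphere_lt_top (hE : finrank ℝ E = n) (hn : 1 ≤ n) {r : ℝ} (hr : 0 < r) :
    μH[(n : ℝ) - 1] (sphere (0 : E) r) < ⊤ := by
  rw [hausdorffMeasure_sphere (by simp [hn]) hr]
  exact ENNReal.mul_lt_top ENNReal.ofReal_lt_top (hE ▸ hausdorffMeasure_unitSphere_lt_top)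

variable {F : Type*} [NormedAddCommGroup F] [NormedSpace ℝ F] {h : E → F} {R K q : ℝ}

omit [NormedSpace ℝ F] in
theorem integrableOn_sphere_of_norm_le_rpow (hE : finrank ℝ E = n) (hn : 1 ≤ n) {r : ℝ}
    (hr : 0 < r) (hRr : R ≤ r) (hm : AEStronglyMeasurable h μH[(n : ℝ) - 1])
    (hh : ∀ x, R ≤ ‖x‖ → ‖h x‖ ≤ K * ‖x‖ ^ q) :
    IntegrableOn h (sphere (0 : E) r) μH[(n : ℝ) - 1] := by
  refine Measure.integrableOn_of_bounded (M := K * r ^ q)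
    (hausdorffMeasure_sphere_lt_top hE hn hr).ne hm ?_
  refine (ae_restrict_iff' isClosed_sphere.measurableSet).mpr (ae_of_all _ fun x hx => ?_)
  rw [mem_sphere_zero_iff_norm] at hx
  simpa [hx] using hh x (hx ▸ hRr)

theorem tendsto_setIntegral_sphere_of_norm_le_rpow (hE : finrank ℝ E = n) (hn : 1 ≤ n)
    (hq : q + ((n : ℝ) - 1) < 0) (hh : ∀ x, R ≤ ‖x‖ → ‖h x‖ ≤ K * ‖x‖ ^ q) :
    Tendsto (fun r => ∫ x in sphere (0 : E) r, h x ∂μH[(n : ℝ) - 1]) atTop (𝓝 0) := by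
  set A := (μH[(n : ℝ) - 1] : Measure E).real (sphere 0 1)
  have hlim : Tendsto (fun r : ℝ => K * A * r ^ (q + ((n : ℝ) - 1))) atTop (𝓝 0) := by
    simpa using (tendsto_rpow_neg_atTop (neg_pos.mpr hq)).const_mul (K * A)
  refine squeeze_zero_norm' ?_ hlim
  filter_upwards [eventually_ge_atTop R, eventually_gt_atTop 0] with r hRr hr
  calc ‖∫ x in sphere (0 : E) r, h x ∂μH[(n : ℝ) - 1]‖
      ≤ K * r ^ q * (μH[(n : ℝ) - 1] : Measure E).real (sphere 0 r) := by
        refine norm_setIntegral_le_of_norm_le_const (hausdorffMeasure_sphere_lt_top hE hn hr)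
          fun x hx => ?_
        rw [mem_sphere_zero_iff_norm] at hx
        simpa [hx] using hh x (hx ▸ hRr)
    _ = K * A * r ^ (q + ((n : ℝ) - 1)) := by
        rw [measureReal_hausdorffMeasure_sphere (by simp [hn]) hr, Real.rpow_add hr]; ring

end SphereMeasure

section Mass

variable {n : ℕ}

noncomputable def partialDeriv (k : Fin n) (h : EuclideanSpace ℝ (Fin n) → ℝ)
    (x : EuclideanSpace ℝ (Fin n)) : ℝ :=
  fderiv ℝ h x (EuclideanSpace.single k 1)

noncomputable def massIntegrand (G : EuclideanSpace ℝ (Fin n) → Matrix (Fin n) (Fin n) ℝ)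
    (x : EuclideanSpace ℝ (Fin n)) : ℝ :=
  ∑ i, ∑ j, (partialDeriv i (fun y => G y i j) x - partialDeriv j (fun y => G y i i) x) *
    (x j / ‖x‖)

/-- The first-order term of the product rule `massIntegrand_smul`. -/
noncomputable def massPairing (M : Matrix (Fin n) (Fin n) ℝ) (v x : EuclideanSpace ℝ (Fin n)) :
    ℝ :=
  ∑ i, ∑ j, (M i j * v i - M i i * v j) * (x j / ‖x‖)

theorem massSurfaceIntegral_eq_setIntegral_massIntegrand
    (G : EuclideanSpace ℝ (Fin n) → Matrix (Fin n) (Fin n) ℝ) (r : ℝ) :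
    massSurfaceIntegral n G r =
      ∫ x in sphere (0 : EuclideanSpace ℝ (Fin n)) r, massIntegrand G x ∂μH[(n : ℝ) - 1] :=
  rfl

theorem measurable_massIntegrand (G : EuclideanSpace ℝ (Fin n) → Matrix (Fin n) (Fin n) ℝ) :
    Measurable (massIntegrand G) := by
  unfold massIntegrand partialDeriv
  fun_prop

theorem abs_sum_sum_mul_coord_div_norm_le {t : Fin n → Fin n → ℝ} {c : ℝ}
    (ht : ∀ i j, |t i j| ≤ c) (x : EuclideanSpace ℝ (Fin n)) :
    |∑ i, ∑ j, t i j * (x j / ‖x‖)| ≤ n ^ 2 * c := by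
  have hν : ∀ j, |x j / ‖x‖| ≤ 1 := fun j => by
    rw [abs_div, abs_norm]
    exact div_le_one_of_le₀ (by simpa using PiLp.norm_apply_le x j) (norm_nonneg x)
  calc |∑ i, ∑ j, t i j * (x j / ‖x‖)| ≤ ∑ _i : Fin n, ∑ _j : Fin n, c := by
        refine (Finset.abs_sum_le_sum_abs _ _).trans (Finset.sum_le_sum fun i _ => ?_)
        refine (Finset.abs_sum_le_sum_abs _ _).trans (Finset.sum_le_sum fun j _ => ?_)
        rw [abs_mul]
        exact (mul_le_mul (ht i j) (hν j) (abs_nonneg _) ((abs_nonneg _).trans (ht i j))).trans_eq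
          (mul_one c)
    _ = n ^ 2 * c := by
        simp only [Finset.sum_const, Finset.card_univ, Fintype.card_fin, nsmul_eq_mul]; ring

theorem abs_massIntegrand_le {G : EuclideanSpace ℝ (Fin n) → Matrix (Fin n) (Fin n) ℝ}
    {x : EuclideanSpace ℝ (Fin n)} {δ : ℝ}
    (hG : ∀ i j k, |partialDeriv k (fun y => G y i j) x| ≤ δ) :
    |massIntegrand G x| ≤ n ^ 2 * (2 * δ) :=
  abs_sum_sum_mul_coord_div_norm_le (fun i j =>
    (abs_sub _ _).trans (by linarith [hG i j i, hG i i j])) x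

theorem abs_massPairing_le {M : Matrix (Fin n) (Fin n) ℝ} {ε : ℝ} (hM : ∀ i j, |M i j| ≤ ε)
    (v x : EuclideanSpace ℝ (Fin n)) :
    |massPairing M v x| ≤ n ^ 2 * (2 * (ε * ‖v‖)) := by
  refine abs_sum_sum_mul_coord_div_norm_le (fun i j => (abs_sub _ _).trans ?_) x
  have hv : ∀ k, |v k| ≤ ‖v‖ := fun k => by simpa using PiLp.norm_apply_le v k
  have hε : 0 ≤ ε := (abs_nonneg _).trans (hM i j)
  rw [abs_mul, abs_mul, two_mul]
  gcongr <;> first | exact hM _ _ | exact hv _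

theorem massPairing_one_add (M : Matrix (Fin n) (Fin n) ℝ) (v x : EuclideanSpace ℝ (Fin n)) :
    massPairing (1 + M) v x = (1 - n) * inner ℝ v (‖x‖⁻¹ • x) + massPairing M v x := by
  have hflat : ∑ i, ∑ j, ((1 : Matrix (Fin n) (Fin n) ℝ) i j * v i - v j) * (x j / ‖x‖) =
      (1 - n) * ∑ j, v j * (x j / ‖x‖) := by
    simp only [sub_mul, Finset.sum_sub_distrib, Matrix.one_apply, ite_mul, one_mul, zero_mul,
      Finset.sum_ite_eq, Finset.mem_univ, if_true, Finset.sum_const, Finset.card_univ,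
      Fintype.card_fin, nsmul_eq_mul]
  have hinner : inner ℝ v (‖x‖⁻¹ • x) = ∑ j, v j * (x j / ‖x‖) := by
    simp only [PiLp.inner_apply, PiLp.smul_apply, smul_eq_mul, RCLike.inner_apply, conj_trivial]
    exact Finset.sum_congr rfl fun j _ => by ring
  rw [hinner, ← hflat, massPairing, massPairing, ← Finset.sum_add_distrib]
  refine Finset.sum_congr rfl fun i _ => ?_
  rw [← Finset.sum_add_distrib]
  refine Finset.sum_congr rfl fun j _ => ?_
  simp only [Matrix.add_apply, Matrix.one_apply_eq]
  ring

theorem gradient_apply_eq_partialDeriv (f : EuclideanSpace ℝ (Fin n) → ℝ)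
    (x : EuclideanSpace ℝ (Fin n)) (k : Fin n) : gradient f x k = partialDeriv k f x := by
  rw [partialDeriv, ← inner_gradient_left, EuclideanSpace.inner_single_right]
  simp

theorem partialDeriv_mul {f g : EuclideanSpace ℝ (Fin n) → ℝ} {x : EuclideanSpace ℝ (Fin n)}
    (hf : DifferentiableAt ℝ f x) (hg : DifferentiableAt ℝ g x) (k : Fin n) :
    partialDeriv k (fun y => f y * g y) x = f x * partialDeriv k g x + g x * gradient f x k := by
  rw [partialDeriv, fderiv_fun_mul hf hg, gradient_apply_eq_partialDeriv]
  simp [partialDeriv]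

theorem massIntegrand_smul {f : EuclideanSpace ℝ (Fin n) → ℝ}
    {G : EuclideanSpace ℝ (Fin n) → Matrix (Fin n) (Fin n) ℝ} {x : EuclideanSpace ℝ (Fin n)}
    (hf : DifferentiableAt ℝ f x) (hG : ∀ i j, DifferentiableAt ℝ (fun y => G y i j) x) :
    massIntegrand (fun y => f y • G y) x =
      f x * massIntegrand G x + massPairing (G x) (gradient f x) x := by
  simp only [massIntegrand, massPairing, Matrix.smul_apply, smul_eq_mul,
    partialDeriv_mul hf (hG _ _), Finset.mul_sum, ← Finset.sum_add_distrib]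
  refine Finset.sum_congr rfl fun i _ => Finset.sum_congr rfl fun j _ => ?_
  ring

theorem massIntegrand_one_add (a : EuclideanSpace ℝ (Fin n) → Matrix (Fin n) (Fin n) ℝ) :
    massIntegrand (fun y => 1 + a y) = massIntegrand a := by
  funext x
  simp only [massIntegrand, partialDeriv, Matrix.add_apply, fderiv_const_add]

theorem massIntegrand_smul_one_add_sub {f : EuclideanSpace ℝ (Fin n) → ℝ}
    {a : EuclideanSpace ℝ (Fin n) → Matrix (Fin n) (Fin n) ℝ} {x : EuclideanSpace ℝ (Fin n)}
    (hf : DifferentiableAt ℝ f x) (ha : ∀ i j, DifferentiableAt ℝ (fun y => a y i j) x) :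
    massIntegrand (fun y => f y • (1 + a y)) x - massIntegrand a x -
        (1 - n) * inner ℝ (gradient f x) (‖x‖⁻¹ • x) =
      (f x - 1) * massIntegrand a x + massPairing (a x) (gradient f x) x := by
  rw [massIntegrand_smul (G := fun y => 1 + a y) hf fun i j => (ha i j).const_add _,
    massIntegrand_one_add, massPairing_one_add]
  ring

theorem abs_massIntegrand_smul_one_add_sub_le {f : EuclideanSpace ℝ (Fin n) → ℝ}
    {a : EuclideanSpace ℝ (Fin n) → Matrix (Fin n) (Fin n) ℝ} {x : EuclideanSpace ℝ (Fin n)}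
    {ε δ : ℝ} (hf : DifferentiableAt ℝ f x) (ha : ∀ i j, DifferentiableAt ℝ (fun y => a y i j) x)
    (hf_one : |f x - 1| ≤ ε) (ha_bound : ∀ i j, |a x i j| ≤ ε)
    (ha_deriv : ∀ i j k, |partialDeriv k (fun y => a y i j) x| ≤ δ)
    (hf_grad : ‖gradient f x‖ ≤ δ) :
    |massIntegrand (fun y => f y • (1 + a y)) x - massIntegrand a x -
        (1 - n) * inner ℝ (gradient f x) (‖x‖⁻¹ • x)| ≤ n ^ 2 * (4 * (ε * δ)) := by
  have hε : 0 ≤ ε := (abs_nonneg _).trans hf_one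
  rw [massIntegrand_smul_one_add_sub hf ha]
  calc _ ≤ |f x - 1| * |massIntegrand a x| + |massPairing (a x) (gradient f x) x| := by
        rw [← abs_mul]; exact abs_add_le _ _
    _ ≤ ε * (n ^ 2 * (2 * δ)) + n ^ 2 * (2 * (ε * δ)) := by
        gcongr
        · exact abs_massIntegrand_le ha_deriv
        · exact (abs_massPairing_le ha_bound _ x).trans (by gcongr)
    _ = n ^ 2 * (4 * (ε * δ)) := by ring

theorem measurable_inner_gradient_normalize (f : EuclideanSpace ℝ (Fin n) → ℝ) :
    Measurable fun x => inner ℝ (gradient f x) (‖x‖⁻¹ • x) := by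
  have hgrad : Measurable (gradient f) :=
    (InnerProductSpace.toDual ℝ _).symm.continuous.measurable.comp (measurable_fderiv ℝ f)
  exact hgrad.inner (by fun_prop)

end Mass

theorem mass_change_formula_general (n : ℕ) (hn : 3 ≤ n) (R C τ : ℝ)
    (hR : 0 < R) (hτ : ((n : ℝ) - 2) / 2 < τ)
    (a : EuclideanSpace ℝ (Fin n) → Matrix (Fin n) (Fin n) ℝ)
    (ha_diff : ∀ (i j : Fin n) (x : EuclideanSpace ℝ (Fin n)), R ≤ ‖x‖ →
      DifferentiableAt ℝ (fun y => a y i j) x)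
    (ha_bound : ∀ (i j : Fin n) (x : EuclideanSpace ℝ (Fin n)), R ≤ ‖x‖ →
      |a x i j| ≤ C * ‖x‖ ^ (-τ))
    (ha_deriv : ∀ (i j k : Fin n) (x : EuclideanSpace ℝ (Fin n)), R ≤ ‖x‖ →
      |fderiv ℝ (fun y => a y i j) x (EuclideanSpace.single k 1)| ≤ C * ‖x‖ ^ (-τ - 1))
    (f : EuclideanSpace ℝ (Fin n) → ℝ)
    (hf_diff : ∀ x : EuclideanSpace ℝ (Fin n), R ≤ ‖x‖ → DifferentiableAt ℝ f x)
    (hf_one : ∀ x : EuclideanSpace ℝ (Fin n), R ≤ ‖x‖ → |f x - 1| ≤ C * ‖x‖ ^ (-τ))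
    (hf_grad : ∀ x : EuclideanSpace ℝ (Fin n), R ≤ ‖x‖ →
      ‖gradient f x‖ ≤ C * ‖x‖ ^ (-τ - 1)) :
    Tendsto
      (fun r : ℝ =>
        massSurfaceIntegral n (fun x => f x • ((1 : Matrix (Fin n) (Fin n) ℝ) + a x)) r -
        massSurfaceIntegral n (fun x => (1 : Matrix (Fin n) (Fin n) ℝ) + a x) r -
        ((1 : ℝ) - (n : ℝ)) *
          ∫ x in Metric.sphere (0 : EuclideanSpace ℝ (Fin n)) r,
            (inner ℝ (gradient f x) (‖x‖⁻¹ • x) : ℝ) ∂(μH[(n : ℝ) - 1]))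
      atTop (nhds 0) := by
  have hE : finrank ℝ (EuclideanSpace ℝ (Fin n)) = n := finrank_euclideanSpace_fin
  have hn1 : 1 ≤ n := by omega
  have hda (x : EuclideanSpace ℝ (Fin n)) (hx : R ≤ ‖x‖) :
      ‖massIntegrand a x‖ ≤ n ^ 2 * (2 * C) * ‖x‖ ^ (-τ - 1) := by
    simpa [mul_assoc] using abs_massIntegrand_le (ha_deriv · · · x hx)
  have hdf (x : EuclideanSpace ℝ (Fin n)) (hx : R ≤ ‖x‖) :
      ‖inner ℝ (gradient f x) (‖x‖⁻¹ • x)‖ ≤ C * ‖x‖ ^ (-τ - 1) :=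
    (norm_inner_inv_norm_smul_le _ x).trans (hf_grad x hx)
  have hrem (x : EuclideanSpace ℝ (Fin n)) (hx : R ≤ ‖x‖) :
      ‖massIntegrand (fun y => f y • (1 + a y)) x - massIntegrand a x -
        (1 - n) * inner ℝ (gradient f x) (‖x‖⁻¹ • x)‖ ≤
          n ^ 2 * (4 * C ^ 2) * ‖x‖ ^ (-2 * τ - 1) := by
    refine (abs_massIntegrand_smul_one_add_sub_le (hf_diff x hx) (ha_diff · · x hx) (hf_one x hx)
      (ha_bound · · x hx) (ha_deriv · · · x hx) (hf_grad x hx)).trans_eq ?_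
    rw [mul_mul_mul_comm, ← Real.rpow_add (hR.trans_le hx)]
    ring_nf
  refine (tendsto_setIntegral_sphere_of_norm_le_rpow hE hn1 (by linarith) hrem).congr' ?_
  filter_upwards [eventually_ge_atTop R] with r hRr
  have hint {h : EuclideanSpace ℝ (Fin n) → ℝ} {K q : ℝ} (hm : Measurable h)
      (hh : ∀ x, R ≤ ‖x‖ → ‖h x‖ ≤ K * ‖x‖ ^ q) :=
    integrableOn_sphere_of_norm_le_rpow hE hn1 (hR.trans_le hRr) hRr hm.aestronglyMeasurable hh
  simp only [massSurfaceIntegral_eq_setIntegral_massIntegrand, massIntegrand_one_add]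
  exact integral_sub_sub_const_mul _ (hint (((measurable_massIntegrand _).sub
    (measurable_massIntegrand a)).sub ((measurable_inner_gradient_normalize f).const_mul _)) hrem)
    (hint (measurable_massIntegrand a) hda) (hint (measurable_inner_gradient_normalize f) hdf)

/-- mass-change computation of Theorem 5. With
`g_{ij} = δ_{ij} + a_{ij}` asymptotically flat of order `τ > (n-2)/2` and `f`
asymptotic to `1` with `‖∇f‖ = O(‖x‖^(-τ-1))`, one has
`𝔪_r(f·g) - 𝔪_r(g) - (1-n)∫_{S_r}⟨∇f, ν⟩ dσ → 0` as `r → ∞`. -/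
theorem mass_change_formula (n : ℕ) (hn : 3 ≤ n) (R C τ : ℝ)
    (hR : 0 < R) (hC : 0 ≤ C) (hτ : ((n : ℝ) - 2) / 2 < τ)
    (a : EuclideanSpace ℝ (Fin n) → Matrix (Fin n) (Fin n) ℝ)
    (ha_diff : ∀ (i j : Fin n) (x : EuclideanSpace ℝ (Fin n)), R ≤ ‖x‖ →
      DifferentiableAt ℝ (fun y => a y i j) x)
    (ha_C1 : ∀ i j : Fin n, ContinuousOn (fun x => fderiv ℝ (fun y => a y i j) x)
      {x : EuclideanSpace ℝ (Fin n) | R ≤ ‖x‖})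
    (ha_bound : ∀ (i j : Fin n) (x : EuclideanSpace ℝ (Fin n)), R ≤ ‖x‖ →
      |a x i j| ≤ C * ‖x‖ ^ (-τ))
    (ha_deriv : ∀ (i j k : Fin n) (x : EuclideanSpace ℝ (Fin n)), R ≤ ‖x‖ →
      |fderiv ℝ (fun y => a y i j) x (EuclideanSpace.single k 1)| ≤ C * ‖x‖ ^ (-τ - 1))
    (f : EuclideanSpace ℝ (Fin n) → ℝ)
    (hf_diff : ∀ x : EuclideanSpace ℝ (Fin n), R ≤ ‖x‖ → DifferentiableAt ℝ f x)
    (hf_C1 : ContinuousOn (fun x => fderiv ℝ f x) {x : EuclideanSpace ℝ (Fin n) | R ≤ ‖x‖})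
    (hf_one : ∀ x : EuclideanSpace ℝ (Fin n), R ≤ ‖x‖ → |f x - 1| ≤ C * ‖x‖ ^ (-τ))
    (hf_grad : ∀ x : EuclideanSpace ℝ (Fin n), R ≤ ‖x‖ →
      ‖gradient f x‖ ≤ C * ‖x‖ ^ (-τ - 1)) :
    Tendsto
      (fun r : ℝ =>
        massSurfaceIntegral n (fun x => f x • ((1 : Matrix (Fin n) (Fin n) ℝ) + a x)) r -
        massSurfaceIntegral n (fun x => (1 : Matrix (Fin n) (Fin n) ℝ) + a x) r -
        ((1 : ℝ) - (n : ℝ)) *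
          ∫ x in Metric.sphere (0 : EuclideanSpace ℝ (Fin n)) r,
            (inner ℝ (gradient f x) (‖x‖⁻¹ • x) : ℝ) ∂(μH[(n : ℝ) - 1]))
      atTop (nhds 0) :=
  mass_change_formula_general n hn R C τ hR hτ a ha_diff ha_bound ha_deriv f hf_diff hf_one hf_grad
end
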